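/- arXiv:2211.16142 — 8 statements merged into one kernel-verified Lean document; each statement's English description precedes it below -/
import Mathlib

section
/- Let z = (z̄, z̃) belong to the boundary of the dual generalized power cone (P^α_{m,n})^*, with z ≠ 0 and z̄ ≠ 0. Then necessarily z̃ᵢ > 0 for all i, and the exposed face {z}^⊥ ∩ P^α_{m,n} is the ray generated by f = (-z̄/‖z̄‖², α ∘ z̃^{-1}), i.e., {z}^⊥ ∩ P^α_{m,n} = { t·f : t ≥ 0 }. -/
open Finset

noncomputable section

abbrev E (m n : ℕ) : Type := WithLp 2 (EuclideanSpace ℝ (Fin m) × EuclideanSpace ℝ (Fin n))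

def PowCone (m n : ℕ) (α : Fin n → ℝ) : Set (E m n) :=
  {x | (∀ i, 0 ≤ x.ofLp.2 i) ∧ ‖x.ofLp.1‖ ≤ ∏ i, x.ofLp.2 i ^ α i}

/-!
For `x` in the cone, Cauchy–Schwarz gives `⟪z̄, x̄⟫ ≥ -‖z̄‖ ‖x̄‖`, and weighted AM-GM applied to the
numbers `z̃ᵢ x̃ᵢ / αᵢ` gives `⟪z̃, x̃⟫ ≥ ‖z̄‖ ∏ x̃ᵢ ^ αᵢ ≥ ‖z̄‖ ‖x̄‖`; hence `⟪z, x⟫ ≥ 0`. On the face all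
these inequalities are equalities. The AM-GM equality case forces `z̃ᵢ x̃ᵢ / αᵢ = ⟪z̃, x̃⟫ =: t` for
every `i`, and the Cauchy–Schwarz equality case forces `x̄` to be the nonpositive multiple of `z̄` of
norm `t / ‖z̄‖`; together, `x = t f`.
-/

open Real
open scoped InnerProductSpace

section WeightedProducts

variable {ι : Type*} [Fintype ι] {α : ι → ℝ}

lemma pos_of_prod_div_rpow_ne_zero {c : ι → ℝ} (hα : ∀ i, 0 < α i) (hc : ∀ i, 0 ≤ c i)
    (h : ∏ i, (c i / α i) ^ α i ≠ 0) (i : ι) : 0 < c i :=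
  (hc i).lt_of_ne fun h0 => h <| prod_eq_zero (mem_univ i) <| by
    rw [← h0, zero_div, zero_rpow (hα i).ne']

lemma prod_mul_rpow_of_sum_eq_one {a : ι → ℝ} {t : ℝ} (hα : ∀ i, 0 ≤ α i)
    (hαsum : ∑ i, α i = 1) (ht : 0 ≤ t) (ha : ∀ i, 0 ≤ a i) :
    ∏ i, (t * a i) ^ α i = t * ∏ i, a i ^ α i := by
  simp_rw [mul_rpow ht (ha _), prod_mul_distrib]
  rw [← rpow_sum_of_nonneg ht fun i _ => hα i, hαsum, rpow_one]

lemma prod_div_rpow_eq_inv {a b : ι → ℝ} (hab : ∀ i, 0 ≤ a i / b i) :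
    ∏ i, (b i / a i) ^ α i = (∏ i, (a i / b i) ^ α i)⁻¹ := by
  rw [← prod_inv_distrib]
  exact prod_congr rfl fun i _ => by rw [← inv_rpow (hab i), inv_div]

lemma prod_div_rpow_mul_prod_rpow_eq {c x : ι → ℝ} (hα : ∀ i, 0 < α i) (hc : ∀ i, 0 ≤ c i)
    (hx : ∀ i, 0 ≤ x i) :
    (∏ i, (c i / α i) ^ α i) * ∏ i, x i ^ α i = ∏ i, (c i / α i * x i) ^ α i := by
  rw [← prod_mul_distrib]
  exact prod_congr rfl fun i _ => (mul_rpow (div_nonneg (hc i) (hα i).le) (hx i)).symm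

lemma sum_mul_div_mul_eq {c x : ι → ℝ} (hα : ∀ i, 0 < α i) :
    ∑ i, α i * (c i / α i * x i) = ∑ i, c i * x i :=
  sum_congr rfl fun i _ => by field_simp [(hα i).ne']

lemma prod_div_rpow_mul_prod_rpow_le_sum_mul {c x : ι → ℝ} (hα : ∀ i, 0 < α i)
    (hαsum : ∑ i, α i = 1) (hc : ∀ i, 0 ≤ c i) (hx : ∀ i, 0 ≤ x i) :
    (∏ i, (c i / α i) ^ α i) * ∏ i, x i ^ α i ≤ ∑ i, c i * x i := by
  rw [prod_div_rpow_mul_prod_rpow_eq hα hc hx, ← sum_mul_div_mul_eq hα]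
  exact geom_mean_le_arith_mean_weighted univ α _ (fun i _ => (hα i).le) hαsum
    fun i _ => mul_nonneg (div_nonneg (hc i) (hα i).le) (hx i)

lemma eq_sum_mul_mul_div_of_prod_div_rpow_mul_prod_rpow_eq {c x : ι → ℝ} (hα : ∀ i, 0 < α i)
    (hαsum : ∑ i, α i = 1) (hc : ∀ i, 0 < c i) (hx : ∀ i, 0 ≤ x i)
    (h : (∏ i, (c i / α i) ^ α i) * ∏ i, x i ^ α i = ∑ i, c i * x i) (j : ι) :
    x j = (∑ i, c i * x i) * (α j / c j) := by
  have hmean := (geom_mean_eq_arith_mean_weighted_iff_of_pos' univ α (fun i => c i / α i * x i)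
    (fun i _ => hα i) hαsum fun i _ => mul_nonneg (div_nonneg (hc i).le (hα i).le) (hx i)).1
    (by rwa [← prod_div_rpow_mul_prod_rpow_eq hα (fun i => (hc i).le) hx, sum_mul_div_mul_eq hα])
    j (mem_univ j)
  rw [sum_mul_div_mul_eq hα] at hmean
  rw [← hmean]
  field_simp [(hα j).ne', (hc j).ne']

end WeightedProducts

lemma eq_neg_smul_of_inner_eq_neg_norm_mul {F : Type*} [NormedAddCommGroup F]
    [InnerProductSpace ℝ F] {u v : F} (hu : u ≠ 0) (h : ⟪u, v⟫_ℝ = -(‖u‖ * ‖v‖)) :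
    v = -(‖v‖ / ‖u‖) • u := by
  have h' : ⟪u, -v⟫_ℝ = ‖u‖ * ‖-v‖ := by rw [inner_neg_right, h, norm_neg, neg_neg]
  rw [neg_smul, ← norm_neg v]
  exact neg_eq_iff_eq_neg.1 ((inner_eq_norm_mul_iff_div hu).1 h').symm

lemma sum_mul_eq_inner {ι : Type*} [Fintype ι] (u v : EuclideanSpace ℝ ι) :
    ∑ i, u i * v i = ⟪u, v⟫_ℝ := by
  simp [EuclideanSpace.inner_eq_star_dotProduct, dotProduct, mul_comm]

lemma inner_eq_sum_add_sum {m n : ℕ} (z x : E m n) :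
    ⟪z, x⟫_ℝ = ∑ i, z.ofLp.1 i * x.ofLp.1 i + ∑ i, z.ofLp.2 i * x.ofLp.2 i := by
  rw [WithLp.prod_inner_apply, sum_mul_eq_inner, sum_mul_eq_inner]

namespace PowCone

variable {m n : ℕ} {α : Fin n → ℝ}

lemma smul_mem (hα : ∀ i, 0 ≤ α i) (hαsum : ∑ i, α i = 1) {x : E m n}
    (hx : x ∈ PowCone m n α) {t : ℝ} (ht : 0 ≤ t) : t • x ∈ PowCone m n α := by
  obtain ⟨hx2, hx1⟩ := hx
  refine ⟨fun i => mul_nonneg ht (hx2 i), ?_⟩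
  simp only [WithLp.ofLp_smul, Prod.smul_fst, Prod.smul_snd, PiLp.smul_apply, smul_eq_mul,
    norm_smul, Real.norm_of_nonneg ht]
  rw [prod_mul_rpow_of_sum_eq_one hα hαsum ht hx2]
  exact mul_le_mul_of_nonneg_left hx1 ht

variable {z f : E m n}

lemma generator_mem (hα : ∀ i, 0 < α i) (hz : ∀ i, 0 < z.ofLp.2 i)
    (hzbd : ‖z.ofLp.1‖ = ∏ i, (z.ofLp.2 i / α i) ^ α i)
    (hf1 : f.ofLp.1 = (-(‖z.ofLp.1‖ ^ 2)⁻¹) • z.ofLp.1)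
    (hf2 : ∀ i, f.ofLp.2 i = α i / z.ofLp.2 i) : f ∈ PowCone m n α := by
  refine ⟨fun i => by rw [hf2]; exact div_nonneg (hα i).le (hz i).le, ?_⟩
  simp_rw [hf2]
  rw [prod_div_rpow_eq_inv fun i => div_nonneg (hz i).le (hα i).le, ← hzbd, hf1, norm_smul,
    norm_neg, norm_inv, norm_pow, norm_norm]
  exact le_of_eq (by field_simp)

lemma inner_generator_eq_zero (hαsum : ∑ i, α i = 1) (hz : ∀ i, 0 < z.ofLp.2 i)
    (hz1 : z.ofLp.1 ≠ 0) (hf1 : f.ofLp.1 = (-(‖z.ofLp.1‖ ^ 2)⁻¹) • z.ofLp.1)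
    (hf2 : ∀ i, f.ofLp.2 i = α i / z.ofLp.2 i) : ⟪z, f⟫_ℝ = 0 := by
  rw [WithLp.prod_inner_apply, ← sum_mul_eq_inner z.ofLp.2, hf1, inner_smul_right,
    real_inner_self_eq_norm_sq]
  simp_rw [hf2]
  rw [sum_congr rfl fun i _ => mul_div_cancel₀ (α i) (hz i).ne', hαsum]
  field_simp
  ring

lemma eq_smul_generator_of_inner_eq_zero (hα : ∀ i, 0 < α i) (hαsum : ∑ i, α i = 1)
    (hz : ∀ i, 0 < z.ofLp.2 i) (hzbd : ‖z.ofLp.1‖ = ∏ i, (z.ofLp.2 i / α i) ^ α i)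
    (hz1 : z.ofLp.1 ≠ 0) (hf1 : f.ofLp.1 = (-(‖z.ofLp.1‖ ^ 2)⁻¹) • z.ofLp.1)
    (hf2 : ∀ i, f.ofLp.2 i = α i / z.ofLp.2 i) {x : E m n} (hx : x ∈ PowCone m n α)
    (hzx : ⟪z, x⟫_ℝ = 0) : x = (∑ i, z.ofLp.2 i * x.ofLp.2 i) • f := by
  obtain ⟨hx2, hx1⟩ := hx
  set N := ‖z.ofLp.1‖
  set P := ∏ i, x.ofLp.2 i ^ α i
  set B := ∑ i, z.ofLp.2 i * x.ofLp.2 i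
  have hN : 0 < N := norm_pos_iff.2 hz1
  have hcs : -(N * ‖x.ofLp.1‖) ≤ ⟪z.ofLp.1, x.ofLp.1⟫_ℝ :=
    neg_le_of_abs_le (abs_real_inner_le_norm _ _)
  have hamgm : N * P ≤ B :=
    hzbd ▸ prod_div_rpow_mul_prod_rpow_le_sum_mul hα hαsum (fun i => (hz i).le) hx2
  have hcone : N * ‖x.ofLp.1‖ ≤ N * P := mul_le_mul_of_nonneg_left hx1 hN.le
  rw [WithLp.prod_inner_apply, ← sum_mul_eq_inner z.ofLp.2] at hzx
  -- the chain `N P ≤ B = -⟪z̄, x̄⟫ ≤ N ‖x̄‖ ≤ N P` collapses to equalities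
  have hB : N * P = B := by linarith
  have hnorm : N * ‖x.ofLp.1‖ = B := by linarith
  refine WithLp.ofLp_injective 2 (Prod.ext ?_ (PiLp.ext fun j => ?_))
  · have hbar : x.ofLp.1 = -(‖x.ofLp.1‖ / N) • z.ofLp.1 :=
      eq_neg_smul_of_inner_eq_neg_norm_mul hz1 (by linarith)
    rw [hbar, WithLp.ofLp_smul, Prod.smul_fst, hf1, smul_smul, ← hnorm]
    congr 1
    field_simp
  · rw [WithLp.ofLp_smul, Prod.smul_snd, PiLp.smul_apply, smul_eq_mul, hf2]
    exact eq_sum_mul_mul_div_of_prod_div_rpow_mul_prod_rpow_eq hα hαsum hz hx2 (hzbd ▸ hB) j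

end PowCone

theorem powCone_face_ray_general (m n : ℕ) (α : Fin n → ℝ)
    (hα : ∀ i, 0 < α i ∧ α i < 1) (hαsum : ∑ i, α i = 1)
    (z : E m n) (hz2 : ∀ i, 0 ≤ z.ofLp.2 i)
    (hzbd : ‖z.ofLp.1‖ = ∏ i, (z.ofLp.2 i / α i) ^ α i) (hz1 : z.ofLp.1 ≠ 0)
    (f : E m n) (hf1 : f.ofLp.1 = (-(‖z.ofLp.1‖ ^ 2)⁻¹) • z.ofLp.1) (hf2 : ∀ i, f.ofLp.2 i = α i / z.ofLp.2 i) :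
    (∀ i, 0 < z.ofLp.2 i) ∧
      {x | x ∈ PowCone m n α ∧ (∑ i, z.ofLp.1 i * x.ofLp.1 i) + (∑ i, z.ofLp.2 i * x.ofLp.2 i) = 0} =
        {x : E m n | ∃ t : ℝ, 0 ≤ t ∧ x = t • f} := by
  have hα' : ∀ i, 0 < α i := fun i => (hα i).1
  have hz : ∀ i, 0 < z.ofLp.2 i :=
    pos_of_prod_div_rpow_ne_zero hα' hz2 (hzbd ▸ norm_ne_zero_iff.2 hz1)
  refine ⟨hz, Set.ext fun x => ?_⟩
  simp only [Set.mem_ofPred_eq, ← inner_eq_sum_add_sum]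
  constructor
  · rintro ⟨hx, hzx⟩
    exact ⟨_, sum_nonneg fun i _ => mul_nonneg (hz i).le (hx.1 i),
      PowCone.eq_smul_generator_of_inner_eq_zero hα' hαsum hz hzbd hz1 hf1 hf2 hx hzx⟩
  · rintro ⟨t, ht, rfl⟩
    refine ⟨PowCone.smul_mem (fun i => (hα' i).le) hαsum
      (PowCone.generator_mem hα' hz hzbd hf1 hf2) ht, ?_⟩
    rw [inner_smul_right, PowCone.inner_generator_eq_zero hαsum hz hz1 hf1 hf2, mul_zero]

/-- If `z` lies on the boundary of the dual cone with `z̄ ≠ 0`, then `z̃ᵢ > 0` for all `i`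
and the exposed face `{z}^⊥ ∩ P` is the ray generated by `f = (-z̄/‖z̄‖², α ∘ z̃⁻¹)`. -/
theorem powCone_face_ray (m n : ℕ) (hm : 1 ≤ m) (hn : 2 ≤ n) (α : Fin n → ℝ)
    (hα : ∀ i, 0 < α i ∧ α i < 1) (hαsum : ∑ i, α i = 1)
    (z : E m n) (hz2 : ∀ i, 0 ≤ z.ofLp.2 i)
    (hzbd : ‖z.ofLp.1‖ = ∏ i, (z.ofLp.2 i / α i) ^ α i) (hz1 : z.ofLp.1 ≠ 0)
    (f : E m n) (hf1 : f.ofLp.1 = (-(‖z.ofLp.1‖ ^ 2)⁻¹) • z.ofLp.1) (hf2 : ∀ i, f.ofLp.2 i = α i / z.ofLp.2 i) :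
    (∀ i, 0 < z.ofLp.2 i) ∧
      {x | x ∈ PowCone m n α ∧ (∑ i, z.ofLp.1 i * x.ofLp.1 i) + (∑ i, z.ofLp.2 i * x.ofLp.2 i) = 0} =
        {x : E m n | ∃ t : ℝ, 0 ≤ t ∧ x = t • f} :=
  powCone_face_ray_general m n α hα hαsum z hz2 hzbd hz1 f hf1 hf2
end
end

section
/- Let z = (0, z̃) be a nonzero point of the boundary of (P^α_{m,n})^* with z̄ = 0, and let I = { i : z̃ᵢ > 0 }, which is nonempty. Then {z}^⊥ ∩ P^α_{m,n} = { (x̄, x̃) ∈ ℝ^m × ℝⁿ₊ : x̄ = 0 and x̃ᵢ = 0 for all i ∈ I }, and this face has dimension n - |I|. -/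
/-!
Since `z̄ = 0`, on `P` the pairing `⟪z, x⟫ = ∑ z̃ᵢ x̃ᵢ` is a sum of nonnegative terms, so it vanishes
exactly when `x̃ᵢ = 0` for all `i ∈ I`. As `z ≠ 0`, `I` has an element `i`, and `x̃ᵢ = 0` kills the
product `∏ x̃ⱼ ^ αⱼ`, forcing `x̄ = 0`. The resulting face is the nonnegative orthant of the coordinate
subspace spanned by the unit vectors `eⱼ`, `j ∉ I`; it contains these vectors, so it spans that
subspace, of dimension `n - |I|`.
-/

open Finset

noncomputable section

theorem sum_mul_eq_zero_iff_of_nonneg {R ι : Type*} [CommRing R] [LinearOrder R]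
    [IsStrictOrderedRing R] [Fintype ι] {a b : ι → R} (ha : ∀ i, 0 ≤ a i) (hb : ∀ i, 0 ≤ b i) :
    ∑ i, a i * b i = 0 ↔ ∀ i, 0 < a i → b i = 0 := by
  rw [Finset.sum_eq_zero_iff_of_nonneg fun i _ => mul_nonneg (ha i) (hb i)]
  simp only [mem_univ, true_implies, mul_eq_zero]
  exact forall_congr' fun i => ⟨fun h hi => h.resolve_left hi.ne', fun h =>
    (ha i).eq_or_lt.imp Eq.symm h⟩

namespace PowCone

variable {m n : ℕ} {α : Fin n → ℝ} {x : E m n}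

theorem mem_of_fst_eq_zero (h1 : x.ofLp.1 = 0) (h2 : ∀ i, 0 ≤ x.ofLp.2 i) :
    x ∈ PowCone m n α :=
  ⟨h2, by rw [h1, norm_zero]; exact prod_nonneg fun i _ => Real.rpow_nonneg (h2 i) _⟩

theorem fst_eq_zero_of_snd_eq_zero (hx : x ∈ PowCone m n α) {i : Fin n} (hαi : α i ≠ 0)
    (hxi : x.ofLp.2 i = 0) : x.ofLp.1 = 0 := by
  have hprod : ∏ j, x.ofLp.2 j ^ α j = 0 :=
    prod_eq_zero (mem_univ i) (by rw [hxi, Real.zero_rpow hαi])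
  exact norm_le_zero_iff.1 (hx.2.trans_eq hprod)

theorem mem_and_sum_mul_eq_zero_iff (hα : ∀ i, 0 < α i) {w : EuclideanSpace ℝ (Fin n)}
    (hw : ∀ i, 0 ≤ w i) (hw_pos : ∃ i, 0 < w i) :
    x ∈ PowCone m n α ∧ ∑ i, w i * x.ofLp.2 i = 0 ↔
      x.ofLp.1 = 0 ∧ (∀ i, 0 ≤ x.ofLp.2 i) ∧ ∀ i, 0 < w i → x.ofLp.2 i = 0 := by
  constructor
  · rintro ⟨hx, hsum⟩
    have hvanish := (sum_mul_eq_zero_iff_of_nonneg hw hx.1).1 hsum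
    obtain ⟨i, hi⟩ := hw_pos
    exact ⟨fst_eq_zero_of_snd_eq_zero hx (hα i).ne' (hvanish i hi), hx.1, hvanish⟩
  · rintro ⟨h1, h2, hvanish⟩
    exact ⟨mem_of_fst_eq_zero h1 h2, (sum_mul_eq_zero_iff_of_nonneg hw h2).2 hvanish⟩

end PowCone

theorem exists_snd_pos_of_fst_eq_zero {m n : ℕ} {z : E m n} (hz1 : z.ofLp.1 = 0)
    (hz2 : ∀ i, 0 ≤ z.ofLp.2 i) (hz : z ≠ 0) : ∃ i, 0 < z.ofLp.2 i := by
  by_contra! h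
  refine hz ((WithLp.ext_iff _).2 (Prod.ext hz1 ?_))
  ext i
  exact le_antisymm (h i) (hz2 i)

section CoordinateFace

variable (m : ℕ) {n : ℕ}

def E.inr : EuclideanSpace ℝ (Fin n) →ₗ[ℝ] E m n :=
  (WithLp.linearEquiv 2 ℝ _).symm.toLinearMap ∘ₗ LinearMap.inr ℝ _ _

theorem E.inr_injective : Function.Injective (E.inr m (n := n)) :=
  (WithLp.linearEquiv 2 ℝ _).symm.injective.comp LinearMap.inr_injective

def coordFace (I : Finset (Fin n)) : Set (E m n) :=
  {x | x.ofLp.1 = 0 ∧ (∀ i, 0 ≤ x.ofLp.2 i) ∧ ∀ i ∈ I, x.ofLp.2 i = 0}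

theorem span_coordFace (I : Finset (Fin n)) :
    Submodule.span ℝ (coordFace m I) =
      Submodule.span ℝ (Set.range fun j : ↥Iᶜ => E.inr m (EuclideanSpace.basisFun (Fin n) ℝ j)) := by
  apply le_antisymm
  · rw [Submodule.span_le]
    rintro x ⟨hx1, -, hxI⟩
    have hx : x = E.inr m x.ofLp.2 := (WithLp.ext_iff _).2 (Prod.ext hx1 rfl)
    rw [hx, ← (EuclideanSpace.basisFun (Fin n) ℝ).sum_repr x.ofLp.2, map_sum]
    refine Submodule.sum_mem _ fun i _ => ?_
    rw [map_smul, EuclideanSpace.basisFun_repr]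
    by_cases hi : i ∈ I
    · rw [hxI i hi, zero_smul]
      exact Submodule.zero_mem _
    · exact Submodule.smul_mem _ _ (Submodule.subset_span ⟨⟨i, mem_compl.2 hi⟩, rfl⟩)
  · rw [Submodule.span_le]
    rintro _ ⟨j, rfl⟩
    refine Submodule.subset_span ⟨rfl, fun i => ?_, fun i hi => ?_⟩
    · show 0 ≤ EuclideanSpace.basisFun (Fin n) ℝ j i
      simp only [EuclideanSpace.basisFun_apply, PiLp.single_apply]
      split_ifs <;> norm_num
    · show EuclideanSpace.basisFun (Fin n) ℝ j i = 0
      have hij : i ≠ j := fun h => mem_compl.1 j.2 (h ▸ hi)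
      simp [hij]

theorem finrank_span_coordFace (I : Finset (Fin n)) :
    Module.finrank ℝ (Submodule.span ℝ (coordFace m I)) = n - I.card := by
  have hindep : LinearIndependent ℝ fun j : ↥Iᶜ => E.inr m (EuclideanSpace.basisFun (Fin n) ℝ j) :=
    ((EuclideanSpace.basisFun (Fin n) ℝ).toBasis.linearIndependent.comp
      (Subtype.val : ↥Iᶜ → Fin n) Subtype.val_injective).map' (E.inr m)
      (LinearMap.ker_eq_bot.2 (E.inr_injective m))
  rw [span_coordFace, finrank_span_eq_card hindep]
  simp

end CoordinateFace

theorem powCone_face_dim_general (m n : ℕ) (α : Fin n → ℝ)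
    (hα : ∀ i, 0 < α i ∧ α i < 1)
    (z : E m n) (hz1 : z.ofLp.1 = 0) (hz2 : ∀ i, 0 ≤ z.ofLp.2 i) (hzne : z ≠ 0)
    (I : Finset (Fin n)) (hI : ∀ i, i ∈ I ↔ 0 < z.ofLp.2 i) :
    I.Nonempty ∧
    {x | x ∈ PowCone m n α ∧ (∑ i, z.ofLp.1 i * x.ofLp.1 i) + (∑ i, z.ofLp.2 i * x.ofLp.2 i) = 0} =
      {x : E m n | x.ofLp.1 = 0 ∧ (∀ i, 0 ≤ x.ofLp.2 i) ∧ ∀ i ∈ I, x.ofLp.2 i = 0} ∧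
    Module.finrank ℝ (Submodule.span ℝ
        {x : E m n | x.ofLp.1 = 0 ∧ (∀ i, 0 ≤ x.ofLp.2 i) ∧ ∀ i ∈ I, x.ofLp.2 i = 0}) = n - I.card := by
  have hz_pos := exists_snd_pos_of_fst_eq_zero hz1 hz2 hzne
  refine ⟨?_, ?_, finrank_span_coordFace m I⟩
  · obtain ⟨i, hi⟩ := hz_pos
    exact ⟨i, (hI i).2 hi⟩
  · ext x
    have hfst : ∑ i, z.ofLp.1 i * x.ofLp.1 i = 0 := by rw [hz1]; simp
    simp only [Set.mem_ofPred_eq, hfst, zero_add, hI,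
      PowCone.mem_and_sum_mul_eq_zero_iff (fun i => (hα i).1) hz2 hz_pos]

/-- If `z = (0, z̃)` is a nonzero boundary point of the dual cone with `I = {i : z̃ᵢ > 0}`,
then `{z}^⊥ ∩ P = {(0, x̃) : x̃ ≥ 0, x̃ᵢ = 0 ∀ i ∈ I}`, a face of dimension `n - |I|`. -/
theorem powCone_face_dim (m n : ℕ) (hm : 1 ≤ m) (hn : 2 ≤ n) (α : Fin n → ℝ)
    (hα : ∀ i, 0 < α i ∧ α i < 1) (hαsum : ∑ i, α i = 1)
    (z : E m n) (hz1 : z.ofLp.1 = 0) (hz2 : ∀ i, 0 ≤ z.ofLp.2 i) (hzne : z ≠ 0)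
    (hzbd : ‖z.ofLp.1‖ = ∏ i, (z.ofLp.2 i / α i) ^ α i)
    (I : Finset (Fin n)) (hI : ∀ i, i ∈ I ↔ 0 < z.ofLp.2 i) :
    I.Nonempty ∧
    {x | x ∈ PowCone m n α ∧ (∑ i, z.ofLp.1 i * x.ofLp.1 i) + (∑ i, z.ofLp.2 i * x.ofLp.2 i) = 0} =
      {x : E m n | x.ofLp.1 = 0 ∧ (∀ i, 0 ≤ x.ofLp.2 i) ∧ ∀ i ∈ I, x.ofLp.2 i = 0} ∧
    Module.finrank ℝ (Submodule.span ℝ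
        {x : E m n | x.ofLp.1 = 0 ∧ (∀ i, 0 ≤ x.ofLp.2 i) ∧ ∀ i ∈ I, x.ofLp.2 i = 0}) = n - I.card :=
  powCone_face_dim_general m n α hα z hz1 hz2 hzne I hI
end
end

section
/- Let z = (0, z̃) ∈ ∂(P^α_{m,n})^* \ {0} with z̄ = 0, let I = {i : z̃ᵢ > 0}, F_z = {z}^⊥ ∩ P^α_{m,n}, and β = ∑_{i ∈ I} αᵢ ∈ (0,1). Then for every η > 0 and every q ∈ {z}^⊥ with ‖q‖ ≤ η, one has dist(q, F_z) ≤ κ · dist(q, P^α_{m,n})^β for some constant κ depending only on z, η, n (a Hölderian error bound with exponent β). -/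
open Finset

noncomputable section

/-! Let `p` be the point of the cone nearest to `q` and `r = ‖q - p‖`. Since `p̃ ≥ 0`, every
coordinate of `q̃` is at least `-r`; as `q̃` is orthogonal to `z̃ ≥ 0`, this forces `p̃ᵢ = O(r)` for
`i ∈ I`, so `‖p̄‖ ≤ ∏ p̃ᵢ ^ αᵢ = O(r ^ β)`. Zeroing `p̄` and the coordinates of `p̃` in `I` gives a
point of `F_z` at distance `r + O(r ^ β) + O(r)` from `q`, and `r ≤ η ^ (1 - β) * r ^ β`. -/

theorem WithLp.prod_norm_le_add {p : ENNReal} [Fact (1 ≤ p)] {α β : Type*}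
    [SeminormedAddCommGroup α] [SeminormedAddCommGroup β] (x : WithLp p (α × β)) :
    ‖x‖ ≤ ‖x.fst‖ + ‖x.snd‖ := by
  calc ‖x‖ = ‖toLp p (x.fst, 0) + toLp p (0, x.snd)‖ := by
        rw [← toLp_add, Prod.mk_add_mk, add_zero, zero_add]; rfl
    _ ≤ ‖x.fst‖ + ‖x.snd‖ := (norm_add_le _ _).trans_eq (by simp)

theorem EuclideanSpace.norm_le_sqrt_card_mul {ι : Type*} [Fintype ι] {x : EuclideanSpace ℝ ι}
    {B : ℝ} (hB : 0 ≤ B) (hx : ∀ i, |x i| ≤ B) : ‖x‖ ≤ √(Fintype.card ι) * B := by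
  rw [EuclideanSpace.norm_eq, ← Real.sqrt_sq hB, ← Real.sqrt_mul (Nat.cast_nonneg _)]
  gcongr
  calc ∑ i, ‖x i‖ ^ 2 ≤ ∑ _i : ι, B ^ 2 := by
        gcongr with i
        exact (Real.norm_eq_abs _).trans_le (hx i)
    _ = Fintype.card ι * B ^ 2 := by simp

theorem Finset.prod_rpow_le_rpow_sum {ι : Type*} {s : Finset ι} {x γ : ι → ℝ} {a : ℝ}
    (ha : 0 ≤ a) (hx : ∀ i ∈ s, 0 ≤ x i ∧ x i ≤ a) (hγ : ∀ i ∈ s, 0 ≤ γ i) :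
    ∏ i ∈ s, x i ^ γ i ≤ a ^ ∑ i ∈ s, γ i := by
  rw [Real.rpow_sum_of_nonneg ha hγ]
  exact prod_le_prod (fun i hi => Real.rpow_nonneg (hx i hi).1 _)
    fun i hi => Real.rpow_le_rpow (hx i hi).1 (hx i hi).2 (hγ i hi)

theorem Real.le_rpow_one_sub_mul_rpow {r η β : ℝ} (hr : 0 ≤ r) (hrη : r ≤ η) (hβ : β ≤ 1) :
    r ≤ η ^ (1 - β) * r ^ β :=
  calc r = r ^ (1 - β) * r ^ β := by rw [← Real.rpow_add' hr (by norm_num)]; simp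
    _ ≤ η ^ (1 - β) * r ^ β := by gcongr

theorem exists_le_mul_of_sum_mul_eq_zero {ι : Type*} [Fintype ι] {w : ι → ℝ}
    (hw : ∀ i, 0 ≤ w i) :
    ∃ C, 0 ≤ C ∧ ∀ (u v : ι → ℝ) (r : ℝ), (∀ i, 0 ≤ u i) → (∀ i, u i ≤ v i + r) →
      ∑ i, w i * v i = 0 → ∀ i, 0 < w i → u i ≤ C * r := by
  refine ⟨(∑ j, w j) * ∑ j, (w j)⁻¹,
    mul_nonneg (sum_nonneg fun j _ => hw j) (sum_nonneg fun j _ => inv_nonneg.2 (hw j)),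
    fun u v r hu huv hwv i hi => ?_⟩
  have hsum : ∑ j, w j * (v j + r) = (∑ j, w j) * r := by
    simp only [mul_add, sum_add_distrib, hwv, zero_add, sum_mul]
  have hwu : w i * u i ≤ (∑ j, w j) * r :=
    calc w i * u i ≤ w i * (v i + r) := by gcongr; exact huv i
      _ ≤ ∑ j, w j * (v j + r) :=
        single_le_sum (fun j _ => mul_nonneg (hw j) ((hu j).trans (huv j))) (mem_univ i)
      _ = (∑ j, w j) * r := hsum
  have hWr : 0 ≤ (∑ j, w j) * r := (mul_nonneg (hw i) (hu i)).trans hwu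
  calc u i = (w i)⁻¹ * (w i * u i) := by field_simp
    _ ≤ (w i)⁻¹ * ((∑ j, w j) * r) := by gcongr
    _ ≤ (∑ j, (w j)⁻¹) * ((∑ j, w j) * r) := by
      gcongr
      exact single_le_sum (fun j _ => inv_nonneg.2 (hw j)) (mem_univ i)
    _ = (∑ j, w j) * (∑ j, (w j)⁻¹) * r := by ring

theorem abs_snd_apply_le_norm {p q : ENNReal} [Fact (1 ≤ p)] [Fact (1 ≤ q)] {α ι : Type*}
    [SeminormedAddCommGroup α] [Fintype ι] (x : WithLp p (α × PiLp q fun _ : ι => ℝ)) (i : ι) :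
    |x.snd i| ≤ ‖x‖ :=
  (PiLp.norm_apply_le x.snd i).trans (WithLp.norm_snd_le (x := x))

section PowCone

variable {m n : ℕ} {α : Fin n → ℝ}

def powConeFace (m n : ℕ) (α : Fin n → ℝ) (w : EuclideanSpace ℝ (Fin n)) : Set (E m n) :=
  {x | x ∈ PowCone m n α ∧ ∑ i, w i * x.ofLp.2 i = 0}

theorem isClosed_powCone (hα : ∀ i, 0 ≤ α i) : IsClosed (PowCone m n α) := by
  have hsnd : ∀ i, Continuous fun x : E m n => x.ofLp.2 i := fun i => by fun_prop
  rw [PowCone, Set.ofPred_and, Set.ofPred_forall]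
  refine (isClosed_iInter fun i => isClosed_le continuous_const (hsnd i)).inter
    (isClosed_le (by fun_prop) (continuous_finsetProd _ fun i _ => ?_))
  exact (Real.continuous_rpow_const (hα i)).comp (hsnd i)

theorem toLp_zero_mem_powCone {y : EuclideanSpace ℝ (Fin n)} (hy : ∀ i, 0 ≤ y i) :
    WithLp.toLp 2 ((0 : EuclideanSpace ℝ (Fin m)), y) ∈ PowCone m n α :=
  ⟨hy, by simpa using prod_nonneg fun i _ => Real.rpow_nonneg (hy i) (α i)⟩

theorem zero_mem_powCone : (0 : E m n) ∈ PowCone m n α :=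
  toLp_zero_mem_powCone (y := 0) fun _ => le_rfl

theorem norm_fst_le_of_mem_powCone (hα : ∀ i, 0 ≤ α i) {x : E m n} (hx : x ∈ PowCone m n α)
    (I : Finset (Fin n)) {a b : ℝ} (ha : 0 ≤ a) (hb : 0 ≤ b) (hxa : ∀ i ∈ I, x.ofLp.2 i ≤ a)
    (hxb : ∀ i, x.ofLp.2 i ≤ b) :
    ‖x.ofLp.1‖ ≤ a ^ (∑ i ∈ I, α i) * b ^ (∑ i ∈ Iᶜ, α i) := by
  refine hx.2.trans ?_
  rw [← prod_mul_prod_compl I]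
  exact mul_le_mul (prod_rpow_le_rpow_sum ha (fun i hi => ⟨hx.1 i, hxa i hi⟩) fun i _ => hα i)
    (prod_rpow_le_rpow_sum hb (fun i _ => ⟨hx.1 i, hxb i⟩) fun i _ => hα i)
    (prod_nonneg fun i _ => Real.rpow_nonneg (hx.1 i) _) (Real.rpow_nonneg ha _)

theorem infDist_powConeFace_le_of_mem_powCone {w : EuclideanSpace ℝ (Fin n)} {I : Finset (Fin n)}
    (hwI : ∀ i ∉ I, w i = 0) {p : E m n} (hp : p ∈ PowCone m n α) {B : ℝ} (hB : 0 ≤ B)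
    (hpI : ∀ i ∈ I, p.ofLp.2 i ≤ B) (q : E m n) :
    Metric.infDist q (powConeFace m n α w) ≤ ‖q - p‖ + (‖p.ofLp.1‖ + √n * B) := by
  set y : E m n := WithLp.toLp 2 (0, WithLp.toLp 2 fun i => if i ∈ I then 0 else p.ofLp.2 i)
  have hy : y ∈ powConeFace m n α w := by
    refine ⟨toLp_zero_mem_powCone fun i => ?_, sum_eq_zero fun i _ => ?_⟩ <;>
      by_cases hi : i ∈ I
    · simp [hi]
    · simpa [hi] using hp.1 i
    · simp [y, hi]
    · simp [y, hwI i hi]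
  have hpy : ‖p - y‖ ≤ ‖p.ofLp.1‖ + √n * B := by
    refine (WithLp.prod_norm_le_add _).trans (add_le_add (by simp [y]) ?_)
    simpa using EuclideanSpace.norm_le_sqrt_card_mul (x := (p - y).snd) hB fun i => by
      by_cases hi : i ∈ I
      · have hpy_i : (p - y).snd i = p.ofLp.2 i := by simp [y, hi]
        rw [hpy_i, abs_of_nonneg (hp.1 i)]
        exact hpI i hi
      · simpa [y, hi] using hB
  calc Metric.infDist q _ ≤ dist q y := Metric.infDist_le_dist_of_mem hy
    _ ≤ ‖q - p‖ + ‖p - y‖ := by rw [dist_eq_norm]; exact norm_sub_le_norm_sub_add_norm_sub q p y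
    _ ≤ ‖q - p‖ + (‖p.ofLp.1‖ + √n * B) := by gcongr

theorem exists_infDist_powConeFace_le_mul_norm_sub_rpow (hα : ∀ i, 0 ≤ α i) (hαsum : ∑ i, α i = 1)
    {w : EuclideanSpace ℝ (Fin n)} (hw : ∀ i, 0 ≤ w i) {I : Finset (Fin n)}
    (hI : ∀ i, i ∈ I ↔ 0 < w i) {η : ℝ} (hη : 0 < η) :
    ∃ κ, 0 < κ ∧ ∀ p ∈ PowCone m n α, ∀ q : E m n, ∑ i, w i * q.ofLp.2 i = 0 → ‖q‖ ≤ η →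
      ‖q - p‖ ≤ η → Metric.infDist q (powConeFace m n α w) ≤
        κ * ‖q - p‖ ^ ∑ i ∈ I, α i := by
  obtain ⟨C, hC, hC_le⟩ := exists_le_mul_of_sum_mul_eq_zero hw
  set β := ∑ i ∈ I, α i
  have hβ : β ≤ 1 := hαsum ▸ sum_le_univ_sum_of_nonneg hα
  have hβc : ∑ i ∈ Iᶜ, α i = 1 - β := by rw [← hαsum, ← sum_add_sum_compl I α]; ring
  refine ⟨C ^ β * (2 * η) ^ (1 - β) + (1 + √n * C) * η ^ (1 - β), by positivity, ?_⟩
  intro p hp q hq hqη hqp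
  set r := ‖q - p‖
  have hr : 0 ≤ r := norm_nonneg _
  have hpq : ∀ i, p.ofLp.2 i ≤ q.ofLp.2 i + r := fun i => by
    have h : |q.ofLp.2 i - p.ofLp.2 i| ≤ r := abs_snd_apply_le_norm (q - p) i
    linarith [(abs_le.1 h).1]
  have hpI : ∀ i ∈ I, p.ofLp.2 i ≤ C * r := fun i hi =>
    hC_le _ _ r hp.1 hpq hq i ((hI i).1 hi)
  have hp2η : ∀ i, p.ofLp.2 i ≤ 2 * η := fun i => by
    have h : |q.ofLp.2 i| ≤ ‖q‖ := abs_snd_apply_le_norm q i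
    linarith [hpq i, (abs_le.1 h).2]
  have hpfst : ‖p.ofLp.1‖ ≤ C ^ β * (2 * η) ^ (1 - β) * r ^ β := by
    rw [mul_right_comm, ← Real.mul_rpow hC hr, ← hβc]
    exact norm_fst_le_of_mem_powCone hα hp I (by positivity) (by positivity) hpI hp2η
  have hwI : ∀ i ∉ I, w i = 0 := fun i hi => le_antisymm (not_lt.1 (mt (hI i).2 hi)) (hw i)
  calc Metric.infDist q _ ≤ r + (‖p.ofLp.1‖ + √n * (C * r)) :=
        infDist_powConeFace_le_of_mem_powCone hwI hp (by positivity) hpI q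
    _ ≤ C ^ β * (2 * η) ^ (1 - β) * r ^ β + (1 + √n * C) * r := by linarith
    _ ≤ (C ^ β * (2 * η) ^ (1 - β) + (1 + √n * C) * η ^ (1 - β)) * r ^ β := by
      linear_combination (1 + √n * C) * Real.le_rpow_one_sub_mul_rpow hr hqp hβ

theorem exists_infDist_powConeFace_le_mul_infDist_rpow (hα : ∀ i, 0 ≤ α i)
    (hαsum : ∑ i, α i = 1) {w : EuclideanSpace ℝ (Fin n)} (hw : ∀ i, 0 ≤ w i)
    {I : Finset (Fin n)} (hI : ∀ i, i ∈ I ↔ 0 < w i) {η : ℝ} (hη : 0 < η) :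
    ∃ κ, 0 < κ ∧ ∀ q : E m n, ∑ i, w i * q.ofLp.2 i = 0 → ‖q‖ ≤ η →
      Metric.infDist q (powConeFace m n α w) ≤
        κ * Metric.infDist q (PowCone m n α) ^ ∑ i ∈ I, α i := by
  obtain ⟨κ, hκ, hκ_le⟩ :=
    exists_infDist_powConeFace_le_mul_norm_sub_rpow (m := m) hα hαsum hw hI hη
  refine ⟨κ, hκ, fun q hq hqη => ?_⟩
  obtain ⟨p, hp, hqp⟩ := (isClosed_powCone (m := m) hα).exists_infDist_eq_dist
    ⟨0, zero_mem_powCone⟩ q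
  have hqp_η : ‖q - p‖ ≤ η := by
    rw [← dist_eq_norm, ← hqp]
    exact (Metric.infDist_le_dist_of_mem zero_mem_powCone).trans (by rwa [dist_zero_right])
  rw [hqp, dist_eq_norm]
  exact hκ_le p hp q hq hqη hqp_η

end PowCone

theorem powCone_holder_error_bound_general (m n : ℕ) (α : Fin n → ℝ)
    (hα : ∀ i, 0 < α i ∧ α i < 1) (hαsum : ∑ i, α i = 1)
    (z : E m n) (hz1 : z.ofLp.1 = 0) (hz2 : ∀ i, 0 ≤ z.ofLp.2 i)
    (I : Finset (Fin n)) (hI : ∀ i, i ∈ I ↔ 0 < z.ofLp.2 i)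
    (β : ℝ) (hβ : β = ∑ i ∈ I, α i)
    (Fz : Set (E m n))
    (hFz : Fz = {x | x ∈ PowCone m n α ∧
        (∑ i, z.ofLp.1 i * x.ofLp.1 i) + (∑ i, z.ofLp.2 i * x.ofLp.2 i) = 0})
    (η : ℝ) (hη : 0 < η) :
    ∃ κ : ℝ, 0 < κ ∧ ∀ q : E m n,
      (∑ i, z.ofLp.1 i * q.ofLp.1 i) + (∑ i, z.ofLp.2 i * q.ofLp.2 i) = 0 → ‖q‖ ≤ η →
      Metric.infDist q Fz ≤ κ * Metric.infDist q (PowCone m n α) ^ β := by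
  obtain ⟨κ, hκ, hκ_le⟩ := exists_infDist_powConeFace_le_mul_infDist_rpow (m := m)
    (fun i => (hα i).1.le) hαsum hz2 hI hη
  have hz1' : z.fst = 0 := hz1
  have hFz' : Fz = powConeFace m n α z.ofLp.2 := by simp [hFz, powConeFace, hz1']
  refine ⟨κ, hκ, fun q hq hqη => ?_⟩
  rw [hFz', hβ]
  exact hκ_le q (by simpa [hz1'] using hq) hqη

/-- Hölderian error bound with exponent `β = ∑_{i ∈ I} αᵢ` for the face exposed by
`z = (0, z̃)`. -/
theorem powCone_holder_error_bound (m n : ℕ) (hm : 1 ≤ m) (hn : 2 ≤ n) (α : Fin n → ℝ)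
    (hα : ∀ i, 0 < α i ∧ α i < 1) (hαsum : ∑ i, α i = 1)
    (z : E m n) (hz1 : z.ofLp.1 = 0) (hz2 : ∀ i, 0 ≤ z.ofLp.2 i) (hzne : z ≠ 0)
    (hzbd : ‖z.ofLp.1‖ = ∏ i, (z.ofLp.2 i / α i) ^ α i)
    (I : Finset (Fin n)) (hI : ∀ i, i ∈ I ↔ 0 < z.ofLp.2 i)
    (β : ℝ) (hβ : β = ∑ i ∈ I, α i)
    (Fz : Set (E m n))
    (hFz : Fz = {x | x ∈ PowCone m n α ∧
        (∑ i, z.ofLp.1 i * x.ofLp.1 i) + (∑ i, z.ofLp.2 i * x.ofLp.2 i) = 0})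
    (η : ℝ) (hη : 0 < η) :
    ∃ κ : ℝ, 0 < κ ∧ ∀ q : E m n,
      (∑ i, z.ofLp.1 i * q.ofLp.1 i) + (∑ i, z.ofLp.2 i * q.ofLp.2 i) = 0 → ‖q‖ ≤ η →
      Metric.infDist q Fz ≤ κ * Metric.infDist q (PowCone m n α) ^ β :=
  powCone_holder_error_bound_general m n α hα hαsum z hz1 hz2 I hI β hβ Fz hFz η hη
end
end

section
/- Let v = (v̄, ṽ) ∈ ∂P^α_{m,n} with ‖v‖ ≤ η, and let I ⊊ {1,…,n} be nonempty with β = ∑_{i∈I} αᵢ. Then ‖v̄‖ ≤ η^{1-β} · ‖ṽ_I‖^β, where ‖ṽ_I‖ = sqrt(∑_{i∈I} ṽᵢ²). -/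
open Finset

noncomputable section

/-! Split the weighted geometric mean `∏ ṽᵢ^{αᵢ}` along `I` and its complement: each factor with
`i ∈ I` is at most `‖ṽ_I‖`, each other factor at most `η`, and the exponents add up to `β` and
`1 - β` respectively. -/

theorem abs_le_sqrt_sum_sq {ι : Type*} {s : Finset ι} {i : ι} (hi : i ∈ s) (f : ι → ℝ) :
    |f i| ≤ √(∑ j ∈ s, f j ^ 2) :=
  Real.abs_le_sqrt <| single_le_sum (f := fun j => f j ^ 2) (fun j _ => sq_nonneg (f j)) hi

theorem prod_rpow_le_rpow_sum {ι : Type*} (s : Finset ι) {f w : ι → ℝ} {c : ℝ} (hc : 0 ≤ c)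
    (hf : ∀ i ∈ s, 0 ≤ f i) (hfc : ∀ i ∈ s, f i ≤ c) (hw : ∀ i ∈ s, 0 ≤ w i) :
    ∏ i ∈ s, f i ^ w i ≤ c ^ ∑ i ∈ s, w i := by
  rw [Real.rpow_sum_of_nonneg hc hw]
  exact prod_le_prod (fun i hi => Real.rpow_nonneg (hf i hi) _)
    fun i hi => Real.rpow_le_rpow (hf i hi) (hfc i hi) (hw i hi)

theorem prod_rpow_le_rpow_mul_sqrt_sum_sq_rpow {ι : Type*} [Fintype ι] [DecidableEq ι]
    (s : Finset ι) {f w : ι → ℝ} {c : ℝ} (hc : 0 ≤ c) (hf : ∀ i, 0 ≤ f i) (hfc : ∀ i, f i ≤ c)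
    (hw : ∀ i, 0 ≤ w i) (hw1 : ∑ i, w i = 1) :
    ∏ i, f i ^ w i ≤ c ^ (1 - ∑ i ∈ s, w i) * √(∑ i ∈ s, f i ^ 2) ^ ∑ i ∈ s, w i := by
  have hcompl : ∑ i ∈ sᶜ, w i = 1 - ∑ i ∈ s, w i := by
    rw [← hw1, ← sum_add_sum_compl s w, add_sub_cancel_left]
  have hs : ∏ i ∈ s, f i ^ w i ≤ √(∑ i ∈ s, f i ^ 2) ^ ∑ i ∈ s, w i :=
    prod_rpow_le_rpow_sum s (Real.sqrt_nonneg _) (fun i _ => hf i)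
      (fun i hi => (le_abs_self _).trans (abs_le_sqrt_sum_sq hi f)) fun i _ => hw i
  have hsc : ∏ i ∈ sᶜ, f i ^ w i ≤ c ^ (1 - ∑ i ∈ s, w i) :=
    hcompl ▸ prod_rpow_le_rpow_sum sᶜ hc (fun i _ => hf i) (fun i _ => hfc i) fun i _ => hw i
  calc ∏ i, f i ^ w i = (∏ i ∈ sᶜ, f i ^ w i) * ∏ i ∈ s, f i ^ w i := by
        rw [mul_comm, prod_mul_prod_compl]
    _ ≤ _ := mul_le_mul hsc hs (prod_nonneg fun i _ => Real.rpow_nonneg (hf i) _)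
        (Real.rpow_nonneg hc _)

theorem powCone_boundary_norm_bound_general (m n : ℕ) (α : Fin n → ℝ)
    (hα : ∀ i, 0 < α i ∧ α i < 1) (hαsum : ∑ i, α i = 1)
    (η : ℝ) (hη : 0 < η)
    (v : E m n) (hv2 : ∀ i, 0 ≤ v.ofLp.2 i) (hvbd : ‖v.ofLp.1‖ = ∏ i, v.ofLp.2 i ^ α i)
    (hvη : ‖v‖ ≤ η)
    (I : Finset (Fin n))
    (β : ℝ) (hβ : β = ∑ i ∈ I, α i) :
    ‖v.ofLp.1‖ ≤ η ^ (1 - β) * Real.sqrt (∑ i ∈ I, v.ofLp.2 i ^ 2) ^ β := by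
  have hcoord : ∀ i, v.ofLp.2 i ≤ η := fun i =>
    calc v.ofLp.2 i ≤ ‖v.ofLp.2 i‖ := le_abs_self _
      _ ≤ ‖v.ofLp.2‖ := PiLp.norm_apply_le _ i
      _ ≤ ‖v‖ := WithLp.norm_snd_le _ v
      _ ≤ η := hvη
  rw [hvbd, hβ]
  exact prod_rpow_le_rpow_mul_sqrt_sum_sq_rpow I hη.le hv2 hcoord (fun i => (hα i).1.le) hαsum

/-- For `v` on the boundary of the power cone with `‖v‖ ≤ η` and a nonempty proper index set
`I` with `β = ∑_{i∈I} αᵢ`, one has `‖v̄‖ ≤ η^{1-β} ‖ṽ_I‖^β`. -/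
theorem powCone_boundary_norm_bound (m n : ℕ) (hm : 1 ≤ m) (hn : 2 ≤ n) (α : Fin n → ℝ)
    (hα : ∀ i, 0 < α i ∧ α i < 1) (hαsum : ∑ i, α i = 1)
    (η : ℝ) (hη : 0 < η)
    (v : E m n) (hv2 : ∀ i, 0 ≤ v.ofLp.2 i) (hvbd : ‖v.ofLp.1‖ = ∏ i, v.ofLp.2 i ^ α i)
    (hvη : ‖v‖ ≤ η)
    (I : Finset (Fin n)) (hIne : I.Nonempty) (hIproper : I ≠ Finset.univ)
    (β : ℝ) (hβ : β = ∑ i ∈ I, α i) :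
    ‖v.ofLp.1‖ ≤ η ^ (1 - β) * Real.sqrt (∑ i ∈ I, v.ofLp.2 i ^ 2) ^ β :=
  powCone_boundary_norm_bound_general m n α hα hαsum η hη v hv2 hvbd hvη I β hβ
end
end

section
/- Fix z = (0, z̃) ∈ ∂(P^α_{m,n})^* \ {0} with z̄ = 0 and I = {i : z̃ᵢ > 0} ≠ ∅, β = ∑_{i∈I} αᵢ, F_z = {z}^⊥ ∩ P^α_{m,n}, and a unit vector u ∈ ℝ^m. For ε ∈ (0,1) define q_ε = (ε^β u, q̃_ε) where (q̃_ε)ᵢ = 0 for i ∈ I and (q̃_ε)ᵢ = 1 for i ∉ I. Then q_ε ∈ {z}^⊥, dist(q_ε, F_z) = ε^β, and dist(q_ε, P^α_{m,n}) ≤ |I|·ε; consequently limsup_{ε↓0} dist(q_ε, P^α_{m,n})^β / dist(q_ε, F_z) ≤ |I|^β < ∞. -/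
/-! The curve `q_ε` differs from the face `F_z` only in its first block, of norm `ε^β`, so its
distance to `F_z` is exactly `ε^β`. Raising the `I`-coordinates of `q_ε` from `0` to `ε` makes
the product `∏ x̃ᵢ^{αᵢ}` equal to `ε^β`, so the moved point lies in the cone, at distance
`√|I| ε ≤ |I| ε`. The ratio is then at most `(|I| ε)^β / ε^β = |I|^β`. -/

open Finset

noncomputable section

section ProdL2

variable {α β : Type*} [SeminormedAddCommGroup α] [SeminormedAddCommGroup β]

theorem WithLp.prod_dist_eq_dist_fst_of_snd_eq {x y : WithLp 2 (α × β)}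
    (h : x.ofLp.2 = y.ofLp.2) : dist x y = dist x.ofLp.1 y.ofLp.1 := by
  simp only [WithLp.ofLp_snd, WithLp.ofLp_fst] at h ⊢
  simp [WithLp.prod_dist_eq_of_L2, h]

theorem WithLp.prod_dist_eq_dist_snd_of_fst_eq {x y : WithLp 2 (α × β)}
    (h : x.ofLp.1 = y.ofLp.1) : dist x y = dist x.ofLp.2 y.ofLp.2 := by
  simp only [WithLp.ofLp_snd, WithLp.ofLp_fst] at h ⊢
  simp [WithLp.prod_dist_eq_of_L2, h]

theorem Metric.infDist_eq_norm_fst_of_subset {S : Set (WithLp 2 (α × β))} (p : WithLp 2 (α × β))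
    (hS : ∀ x ∈ S, x.ofLp.1 = 0) (hp : WithLp.toLp 2 (0, p.ofLp.2) ∈ S) :
    Metric.infDist p S = ‖p.ofLp.1‖ := by
  refine le_antisymm ?_ ((Metric.le_infDist ⟨_, hp⟩).2 fun y hy => ?_)
  · calc Metric.infDist p S ≤ dist p (WithLp.toLp 2 (0, p.ofLp.2)) :=
          Metric.infDist_le_dist_of_mem hp
      _ = ‖p.ofLp.1‖ := by
        rw [WithLp.prod_dist_eq_dist_fst_of_snd_eq (x := p) (y := WithLp.toLp 2 (0, p.ofLp.2)) rfl]
        exact dist_zero_right _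
  · have hy0 : y.fst = 0 := hS y hy
    simpa [hy0] using WithLp.dist_fst_le p y

end ProdL2

theorem Real.sqrt_natCast_le (k : ℕ) : √(k : ℝ) ≤ k := by
  rcases k.eq_zero_or_pos with rfl | hk
  · simp
  · exact Real.sqrt_le_self_iff.2 (Or.inr (by exact_mod_cast hk))

theorem EuclideanSpace.dist_le_sqrt_card_mul {ι : Type*} [Fintype ι] (I : Finset ι)
    {x y : EuclideanSpace ℝ ι} {ε : ℝ} (hε : 0 ≤ ε) (h_eq : ∀ i ∉ I, x i = y i)
    (h_le : ∀ i ∈ I, dist (x i) (y i) ≤ ε) : dist x y ≤ √(#I : ℝ) * ε := by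
  rw [EuclideanSpace.dist_eq, ← Real.sqrt_sq hε, ← Real.sqrt_mul (Nat.cast_nonneg _)]
  refine Real.sqrt_le_sqrt ?_
  calc ∑ i, dist (x i) (y i) ^ 2 = ∑ i ∈ I, dist (x i) (y i) ^ 2 :=
        (sum_subset (subset_univ I) fun i _ hi => by simp [h_eq i hi]).symm
    _ ≤ #I • ε ^ 2 :=
        sum_le_card_nsmul _ _ _ fun i hi => pow_le_pow_left₀ dist_nonneg (h_le i hi) 2
    _ = #I * ε ^ 2 := nsmul_eq_mul _ _

theorem prod_ite_rpow_eq_rpow_sum {ι : Type*} [Fintype ι] [DecidableEq ι] (I : Finset ι)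
    (α : ι → ℝ) {ε : ℝ} (hε : 0 < ε) :
    ∏ i, (if i ∈ I then ε else 1) ^ α i = ε ^ ∑ i ∈ I, α i := by
  simp [prod_ite_mem, Real.rpow_sum_of_pos hε]

theorem infDist_powCone_le {m n : ℕ} (α : Fin n → ℝ) (I : Finset (Fin n)) {ε : ℝ} (hε : 0 < ε)
    (p : E m n) (hp1 : ‖p.ofLp.1‖ ≤ ε ^ ∑ i ∈ I, α i)
    (hp2 : ∀ i, p.ofLp.2 i = if i ∈ I then 0 else 1) :
    Metric.infDist p (PowCone m n α) ≤ √(#I : ℝ) * ε := by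
  set w : EuclideanSpace ℝ (Fin n) := WithLp.toLp 2 fun i => if i ∈ I then ε else 1
  have hw : WithLp.toLp 2 (p.ofLp.1, w) ∈ PowCone m n α := by
    refine ⟨fun i => ?_, ?_⟩
    · change 0 ≤ if i ∈ I then ε else 1
      split_ifs <;> positivity
    · change ‖p.ofLp.1‖ ≤ ∏ i, (if i ∈ I then ε else 1) ^ α i
      rwa [prod_ite_rpow_eq_rpow_sum I α hε]
  calc Metric.infDist p (PowCone m n α) ≤ dist p (WithLp.toLp 2 (p.ofLp.1, w)) :=
        Metric.infDist_le_dist_of_mem hw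
    _ = dist p.ofLp.2 w := WithLp.prod_dist_eq_dist_snd_of_fst_eq rfl
    _ ≤ √(#I : ℝ) * ε :=
        EuclideanSpace.dist_le_sqrt_card_mul I hε.le
          (fun i hi => by rw [hp2 i]; simp [w, hi])
          (fun i hi => by rw [hp2 i]; simp [w, hi, Real.dist_eq, abs_of_pos hε])

theorem powCone_beta_optimality_general (m n : ℕ) (α : Fin n → ℝ)
    (hα : ∀ i, 0 < α i ∧ α i < 1)
    (z : E m n) (hz1 : z.ofLp.1 = 0) (hz2 : ∀ i, 0 ≤ z.ofLp.2 i)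
    (I : Finset (Fin n)) (hI : ∀ i, i ∈ I ↔ 0 < z.ofLp.2 i)
    (β : ℝ) (hβ : β = ∑ i ∈ I, α i)
    (Fz : Set (E m n))
    (hFz : Fz = {x : E m n | x.ofLp.1 = 0 ∧ (∀ i, 0 ≤ x.ofLp.2 i) ∧ ∀ i ∈ I, x.ofLp.2 i = 0})
    (u : EuclideanSpace ℝ (Fin m)) (hu : ‖u‖ = 1)
    (q : ℝ → E m n)
    (hq1 : ∀ ε ∈ Set.Ioo (0:ℝ) 1, (q ε).ofLp.1 = (ε ^ β) • u)
    (hq2 : ∀ ε ∈ Set.Ioo (0:ℝ) 1, ∀ i, (q ε).ofLp.2 i = if i ∈ I then 0 else 1) :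
    (∀ ε ∈ Set.Ioo (0:ℝ) 1,
      (∑ i, z.ofLp.1 i * (q ε).ofLp.1 i) + (∑ i, z.ofLp.2 i * (q ε).ofLp.2 i) = 0 ∧
      Metric.infDist (q ε) Fz = ε ^ β ∧
      Metric.infDist (q ε) (PowCone m n α) ≤ (I.card : ℝ) * ε) ∧
    Filter.limsup
      (fun ε : ℝ => Metric.infDist (q ε) (PowCone m n α) ^ β / Metric.infDist (q ε) Fz)
      (nhdsWithin 0 (Set.Ioi 0)) ≤ (I.card : ℝ) ^ β := by
  have hβ0 : 0 ≤ β := hβ ▸ sum_nonneg fun i _ => (hα i).1.le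
  have key : ∀ ε ∈ Set.Ioo (0:ℝ) 1,
      (∑ i, z.ofLp.1 i * (q ε).ofLp.1 i) + (∑ i, z.ofLp.2 i * (q ε).ofLp.2 i) = 0 ∧
      Metric.infDist (q ε) Fz = ε ^ β ∧
      Metric.infDist (q ε) (PowCone m n α) ≤ (I.card : ℝ) * ε := by
    intro ε hε
    have hnorm : ‖(q ε).ofLp.1‖ = ε ^ β := by
      rw [hq1 ε hε, norm_smul, hu, mul_one, Real.norm_of_nonneg (Real.rpow_nonneg hε.1.le β)]
    have hzq : ∀ i, z.ofLp.2 i * (q ε).ofLp.2 i = 0 := fun i => by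
      by_cases hi : i ∈ I
      · rw [hq2 ε hε i, if_pos hi, mul_zero]
      · rw [le_antisymm (not_lt.1 (mt (hI i).2 hi)) (hz2 i), zero_mul]
    refine ⟨by rw [hz1, sum_eq_zero fun i _ => hzq i]; simp, ?_, ?_⟩
    · rw [← hnorm, hFz]
      exact Metric.infDist_eq_norm_fst_of_subset _ (fun x hx => hx.1)
        ⟨rfl, fun i => (hq2 ε hε i).trans_ge (by split_ifs <;> norm_num),
          fun i hi => (hq2 ε hε i).trans (if_pos hi)⟩
    · calc Metric.infDist (q ε) (PowCone m n α) ≤ √(#I : ℝ) * ε :=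
            infDist_powCone_le α I hε.1 _ (hβ ▸ hnorm.le) (hq2 ε hε)
        _ ≤ #I * ε := mul_le_mul_of_nonneg_right (Real.sqrt_natCast_le _) hε.1.le
  refine ⟨key, Filter.limsup_le_of_le (Filter.isCoboundedUnder_le_of_le _ fun ε =>
    div_nonneg (Real.rpow_nonneg Metric.infDist_nonneg _) Metric.infDist_nonneg) ?_⟩
  filter_upwards [Ioo_mem_nhdsGT (zero_lt_one' ℝ)] with ε hε
  obtain ⟨-, hF, hP⟩ := key ε hε
  rw [hF, div_le_iff₀ (Real.rpow_pos_of_pos hε.1 β), ← Real.mul_rpow (by positivity) hε.1.le]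
  exact Real.rpow_le_rpow Metric.infDist_nonneg hP hβ0

/-- Optimality of the exponent `β`: along the curve `q_ε` one has `q_ε ∈ {z}^⊥`,
`dist(q_ε, F_z) = ε^β`, `dist(q_ε, P) ≤ |I| ε`, and hence
`limsup_{ε↓0} dist(q_ε,P)^β / dist(q_ε,F_z) ≤ |I|^β`. -/
theorem powCone_beta_optimality (m n : ℕ) (hm : 1 ≤ m) (hn : 2 ≤ n) (α : Fin n → ℝ)
    (hα : ∀ i, 0 < α i ∧ α i < 1) (hαsum : ∑ i, α i = 1)
    (z : E m n) (hz1 : z.ofLp.1 = 0) (hz2 : ∀ i, 0 ≤ z.ofLp.2 i) (hzne : z ≠ 0)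
    (hzbd : ‖z.ofLp.1‖ = ∏ i, (z.ofLp.2 i / α i) ^ α i)
    (I : Finset (Fin n)) (hI : ∀ i, i ∈ I ↔ 0 < z.ofLp.2 i)
    (β : ℝ) (hβ : β = ∑ i ∈ I, α i)
    (Fz : Set (E m n))
    (hFz : Fz = {x : E m n | x.ofLp.1 = 0 ∧ (∀ i, 0 ≤ x.ofLp.2 i) ∧ ∀ i ∈ I, x.ofLp.2 i = 0})
    (u : EuclideanSpace ℝ (Fin m)) (hu : ‖u‖ = 1)
    (q : ℝ → E m n)
    (hq1 : ∀ ε ∈ Set.Ioo (0:ℝ) 1, (q ε).ofLp.1 = (ε ^ β) • u)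
    (hq2 : ∀ ε ∈ Set.Ioo (0:ℝ) 1, ∀ i, (q ε).ofLp.2 i = if i ∈ I then 0 else 1) :
    (∀ ε ∈ Set.Ioo (0:ℝ) 1,
      (∑ i, z.ofLp.1 i * (q ε).ofLp.1 i) + (∑ i, z.ofLp.2 i * (q ε).ofLp.2 i) = 0 ∧
      Metric.infDist (q ε) Fz = ε ^ β ∧
      Metric.infDist (q ε) (PowCone m n α) ≤ (I.card : ℝ) * ε) ∧
    Filter.limsup
      (fun ε : ℝ => Metric.infDist (q ε) (PowCone m n α) ^ β / Metric.infDist (q ε) Fz)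
      (nhdsWithin 0 (Set.Ioi 0)) ≤ (I.card : ℝ) ^ β :=
  powCone_beta_optimality_general m n α hα z hz1 hz2 I hI β hβ Fz hFz u hu q hq1 hq2
end
end

section
/- Let m ≥ 1, n > 2 with α ∈ (0,1)^n summing to 1, or n = 2 with α₁ ≠ α₂ and α₁ + α₂ = 1. If A is a block matrix [[B, 0],[0, E]] where E ∈ ℝ^{n×n} is a generalized permutation matrix with positive nonzero entries E_{k,l_k} satisfying α_{l_k} = α_k for each k, and B ∈ ℝ^{m×m} satisfies ‖Bx‖ = (∏_{k=1}^n E_{k,l_k}^{α_{l_k}})·‖x‖ for all x ∈ ℝ^m, then A is an automorphism of P^α_{m,n}, i.e., A is invertible and A(P^α_{m,n}) = P^α_{m,n}. -/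
open Finset

noncomputable section

/-!
Since `σ` preserves `α`, the second block of `A` multiplies the weighted geometric mean
`∏ xᵢ ^ αᵢ` by `c = ∏ d_k ^ α (σ k) > 0`, and by assumption `B` multiplies the norm of the
first block by the same `c`. So the inequality defining the cone is invariant under `A`, i.e.
`A⁻¹(P) = P`. Moreover `A` is injective (`B` is a nonzero multiple of an isometry and the
permutation block has nonzero entries), hence bijective in finite dimension, and then
`A(P) = A(A⁻¹(P)) = P`.
-/

theorem Real.prod_mul_comp_rpow_of_perm {ι : Type*} [Fintype ι] {α : ι → ℝ} {σ : Equiv.Perm ι}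
    (hperm : ∀ k, α (σ k) = α k) {d y : ι → ℝ} (hd : ∀ k, 0 ≤ d k) (hy : ∀ i, 0 ≤ y i) :
    ∏ k, (d k * y (σ k)) ^ α k = (∏ k, d k ^ α (σ k)) * ∏ i, y i ^ α i := by
  simp_rw [Real.mul_rpow (hd _) (hy _), prod_mul_distrib, hperm]
  congr 1
  simpa only [hperm] using Equiv.prod_comp σ fun i => y i ^ α i

theorem forall_nonneg_mul_comp_perm_iff {ι : Type*} {σ : Equiv.Perm ι} {d y : ι → ℝ}
    (hd : ∀ k, 0 < d k) : (∀ k, 0 ≤ d k * y (σ k)) ↔ ∀ i, 0 ≤ y i := by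
  simp_rw [mul_nonneg_iff_of_pos_left (hd _)]
  exact σ.forall_congr_right (q := fun i => 0 ≤ y i)

theorem LinearMap.injective_of_norm_map_eq_mul_norm {R V W : Type*} [Ring R]
    [NormedAddCommGroup V] [SeminormedAddCommGroup W] [Module R V] [Module R W]
    (B : V →ₗ[R] W) {c : ℝ} (hc : c ≠ 0) (hB : ∀ x, ‖B x‖ = c * ‖x‖) :
    Function.Injective B :=
  (injective_iff_map_eq_zero B).2 fun x hx => by simpa [hx, hc] using hB x

variable {m n : ℕ}

theorem injective_of_blockDiag {B : EuclideanSpace ℝ (Fin m) → EuclideanSpace ℝ (Fin m)}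
    {σ : Equiv.Perm (Fin n)} {d : Fin n → ℝ} {A : E m n → E m n}
    (hBinj : Function.Injective B) (hd : ∀ k, d k ≠ 0)
    (hA1 : ∀ x : E m n, (A x).ofLp.1 = B x.ofLp.1)
    (hA2 : ∀ x : E m n, ∀ k, (A x).ofLp.2 k = d k * x.ofLp.2 (σ k)) :
    Function.Injective A := by
  intro x y hxy
  have h1 : x.ofLp.1 = y.ofLp.1 := hBinj (by rw [← hA1, ← hA1, hxy])
  have h2 : x.ofLp.2 = y.ofLp.2 := by
    ext i
    have hi := congrArg (fun z : E m n => z.ofLp.2 (σ.symm i)) hxy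
    simp only [hA2, Equiv.apply_symm_apply] at hi
    exact mul_left_cancel₀ (hd _) hi
  exact WithLp.ofLp_injective 2 (Prod.ext h1 h2)

theorem map_mem_powCone_iff_of_blockDiag {α : Fin n → ℝ}
    {B : EuclideanSpace ℝ (Fin m) → EuclideanSpace ℝ (Fin m)}
    {σ : Equiv.Perm (Fin n)} {d : Fin n → ℝ} {A : E m n → E m n} (hd : ∀ k, 0 < d k)
    (hperm : ∀ k, α (σ k) = α k)
    (hB : ∀ x : EuclideanSpace ℝ (Fin m), ‖B x‖ = (∏ k, d k ^ α (σ k)) * ‖x‖)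
    (hA1 : ∀ x : E m n, (A x).ofLp.1 = B x.ofLp.1)
    (hA2 : ∀ x : E m n, ∀ k, (A x).ofLp.2 k = d k * x.ofLp.2 (σ k)) (x : E m n) :
    A x ∈ PowCone m n α ↔ x ∈ PowCone m n α := by
  have hc : 0 < ∏ k, d k ^ α (σ k) := prod_pos fun k _ => Real.rpow_pos_of_pos (hd k) _
  simp only [PowCone, Set.mem_ofPred_eq, hA1, hA2, hB, forall_nonneg_mul_comp_perm_iff hd]
  refine and_congr_right fun hx => ?_
  rw [Real.prod_mul_comp_rpow_of_perm hperm (fun k => (hd k).le) hx,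
    mul_le_mul_iff_of_pos_left hc]

/-- Sufficiency: a block-diagonal map `A = [[B,0],[0,E]]` with `E` a positive generalized
permutation matrix respecting `α` and `B` a suitable scaled isometry is an automorphism of
the generalized power cone. -/
theorem powCone_automorphism_sufficiency (m n : ℕ)
    (α : Fin n → ℝ)
    (B : EuclideanSpace ℝ (Fin m) →ₗ[ℝ] EuclideanSpace ℝ (Fin m))
    (σ : Equiv.Perm (Fin n)) (d : Fin n → ℝ) (hd : ∀ k, 0 < d k)
    (hperm : ∀ k, α (σ k) = α k)
    (hB : ∀ x : EuclideanSpace ℝ (Fin m), ‖B x‖ = (∏ k, d k ^ α (σ k)) * ‖x‖)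
    (A : E m n →ₗ[ℝ] E m n)
    (hA1 : ∀ x : E m n, (A x).ofLp.1 = B x.ofLp.1)
    (hA2 : ∀ x : E m n, ∀ k, (A x).ofLp.2 k = d k * x.ofLp.2 (σ k)) :
    Function.Bijective A ∧ ⇑A '' PowCone m n α = PowCone m n α := by
  have hc : 0 < ∏ k, d k ^ α (σ k) := prod_pos fun k _ => Real.rpow_pos_of_pos (hd k) _
  have hinj : Function.Injective A :=
    injective_of_blockDiag (B.injective_of_norm_map_eq_mul_norm hc.ne' hB)
      (fun k => (hd k).ne') hA1 hA2
  have hsurj : Function.Surjective A := LinearMap.injective_iff_surjective.mp hinj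
  have hpre : ⇑A ⁻¹' PowCone m n α = PowCone m n α :=
    Set.ext (map_mem_powCone_iff_of_blockDiag hd hperm hB hA1 hA2)
  exact ⟨⟨hinj, hsurj⟩, by simpa only [hpre] using hsurj.image_preimage (PowCone m n α)⟩
end
end

section
/- Let G ∈ ℝ^{m×m} and h ∈ ℝⁿ satisfy G + Gᵀ = 2(αᵀh)·I_m, where α ∈ (0,1)^n with ∑ αᵢ = 1. Then for every t ∈ ℝ, the matrix exponential e^{tG} satisfies ‖e^{tG} x‖ = ∏_{i=1}^n (e^{t hᵢ})^{αᵢ} · ‖x‖ for all x ∈ ℝ^m; consequently the block diagonal matrix [[e^{tG}, 0],[0, Diag(e^{th})]] maps P^α_{m,n} onto itself. -/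
/-!
Writing `G + Gᵀ = 2c·I` with `c = αᵀh`, the matrix `tG - tc·I` is skew-symmetric, so its
exponential is orthogonal and `e^{tG} = e^{tc} · (orthogonal)` scales every norm by
`e^{tc} = ∏ (e^{t hᵢ})^{αᵢ}`. Since `∏ (e^{t hᵢ} x̃ᵢ)^{αᵢ} = e^{tc} ∏ x̃ᵢ^{αᵢ}`, the block map
`Φₜ = diag(e^{tG}, Diag(e^{th}))` keeps both sides of the defining inequality of the power cone
in the same ratio, so `Φₜ` maps the cone into itself; as `Φₜ ∘ Φ₋ₜ = id`, it maps it onto itself.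
-/

open Finset

noncomputable section

/-- View a plain vector as an element of Euclidean space (the types are definitionally equal). -/
def toEuc {k : ℕ} (f : Fin k → ℝ) : EuclideanSpace ℝ (Fin k) := WithLp.toLp 2 f

/-- Build an element of the ambient space of the power cone from two plain vectors. -/
def mkE {m n : ℕ} (a : Fin m → ℝ) (b : Fin n → ℝ) : E m n := WithLp.toLp 2 (toEuc a, toEuc b)

open scoped Matrix

namespace Matrix

variable {ι 𝔸 : Type*} [Fintype ι] [DecidableEq ι]

theorem transpose_exp_mul_exp_of_transpose_eq_neg [NormedCommRing 𝔸] [NormedAlgebra ℚ 𝔸]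
    [CompleteSpace 𝔸] {S : Matrix ι ι 𝔸} (hS : Sᵀ = -S) :
    (NormedSpace.exp S)ᵀ * NormedSpace.exp S = 1 := by
  rw [← exp_transpose, hS, ← exp_add_of_commute _ _ (Commute.refl S).neg_left, neg_add_cancel,
    NormedSpace.exp_zero]

theorem exp_smul_one_add (a : ℝ) (S : Matrix ι ι ℝ) :
    NormedSpace.exp (a • 1 + S) = Real.exp a • NormedSpace.exp S := by
  have hconst : NormedSpace.exp (fun _ : ι => a) = fun _ => Real.exp a := by
    rw [Pi.exp_def, Real.exp_eq_exp_ℝ]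
  rw [exp_add_of_commute _ _ ((Commute.one_left S).smul_left a), smul_one_eq_diagonal,
    exp_diagonal, hconst, ← smul_one_eq_diagonal, smul_one_mul]

end Matrix

theorem norm_toEuc_mulVec_of_transpose_mul_self {m : ℕ} {M : Matrix (Fin m) (Fin m) ℝ}
    (hM : Mᵀ * M = 1) (x : EuclideanSpace ℝ (Fin m)) : ‖toEuc (M *ᵥ x.ofLp)‖ = ‖x‖ := by
  have hinner : ∀ y : EuclideanSpace ℝ (Fin m), ‖y‖ ^ 2 = y.ofLp ⬝ᵥ y.ofLp := fun y => by
    rw [← real_inner_self_eq_norm_sq, EuclideanSpace.inner_eq_star_dotProduct]; simp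
  refine (sq_eq_sq₀ (norm_nonneg _) (norm_nonneg _)).1 ?_
  rw [hinner, hinner]
  change M *ᵥ x.ofLp ⬝ᵥ M *ᵥ x.ofLp = _
  rw [Matrix.dotProduct_mulVec, ← Matrix.mulVec_transpose, Matrix.mulVec_mulVec, hM,
    Matrix.one_mulVec]

theorem norm_toEuc_exp_smul_mulVec {m : ℕ} {G : Matrix (Fin m) (Fin m) ℝ} {c : ℝ}
    (hG : G + Gᵀ = (2 * c) • 1) (t : ℝ) (x : EuclideanSpace ℝ (Fin m)) :
    ‖toEuc (NormedSpace.exp (t • G) *ᵥ x.ofLp)‖ = Real.exp (t * c) * ‖x‖ := by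
  set S := t • G - (t * c) • (1 : Matrix (Fin m) (Fin m) ℝ)
  have hS : Sᵀ = -S := by
    rw [Matrix.transpose_sub, Matrix.transpose_smul, Matrix.transpose_smul, Matrix.transpose_one,
      eq_sub_of_add_eq' hG]
    module
  have hexp : NormedSpace.exp (t • G) = Real.exp (t * c) • NormedSpace.exp S := by
    rw [← Matrix.exp_smul_one_add, add_sub_cancel]
  rw [hexp, Matrix.smul_mulVec]
  change ‖Real.exp (t * c) • toEuc (NormedSpace.exp S *ᵥ x.ofLp)‖ = _
  rw [norm_smul, norm_toEuc_mulVec_of_transpose_mul_self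
    (Matrix.transpose_exp_mul_exp_of_transpose_eq_neg hS), Real.norm_of_nonneg (Real.exp_pos _).le]

theorem Real.prod_exp_mul_rpow {ι : Type*} (s : Finset ι) (α h : ι → ℝ) (t : ℝ) :
    ∏ i ∈ s, Real.exp (t * h i) ^ α i = Real.exp (t * ∑ i ∈ s, α i * h i) := by
  rw [Finset.mul_sum, Real.exp_sum]
  refine Finset.prod_congr rfl fun i _ => ?_
  rw [← Real.exp_mul, mul_comm, mul_left_comm]

/-- The block diagonal map `[[e^{tG}, 0], [0, Diag(e^{th})]]`. -/
def powConeFlow {m n : ℕ} (G : Matrix (Fin m) (Fin m) ℝ) (h : Fin n → ℝ) (t : ℝ) (x : E m n) :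
    E m n :=
  mkE ((NormedSpace.exp (t • G)).mulVec x.ofLp.1.ofLp) (fun i => Real.exp (t * h i) * x.ofLp.2 i)

section powConeFlow

variable {m n : ℕ} (G : Matrix (Fin m) (Fin m) ℝ) (h : Fin n → ℝ)

theorem powConeFlow_zero (x : E m n) : powConeFlow G h 0 x = x := by
  simp only [powConeFlow, zero_smul, NormedSpace.exp_zero, Matrix.one_mulVec, zero_mul,
    Real.exp_zero, one_mul]
  rfl

theorem powConeFlow_add (s t : ℝ) (x : E m n) :
    powConeFlow G h s (powConeFlow G h t x) = powConeFlow G h (s + t) x := by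
  simp only [powConeFlow, mkE, toEuc, Matrix.mulVec_mulVec, add_smul, add_mul, Real.exp_add,
    mul_assoc]
  rw [Matrix.exp_add_of_commute _ _ (((Commute.refl G).smul_left s).smul_right t)]

theorem powConeFlow_mem_powCone {α : Fin n → ℝ}
    (hG : G + Gᵀ = (2 * ∑ i, α i * h i) • 1) (t : ℝ) {x : E m n} (hx : x ∈ PowCone m n α) :
    powConeFlow G h t x ∈ PowCone m n α := by
  obtain ⟨hx_nonneg, hx_norm⟩ := hx
  refine ⟨fun i => mul_nonneg (Real.exp_pos _).le (hx_nonneg i), ?_⟩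
  change ‖toEuc (NormedSpace.exp (t • G) *ᵥ x.ofLp.1.ofLp)‖ ≤
    ∏ i, (Real.exp (t * h i) * x.ofLp.2 i) ^ α i
  rw [norm_toEuc_exp_smul_mulVec hG, ← Real.prod_exp_mul_rpow]
  calc (∏ i, Real.exp (t * h i) ^ α i) * ‖x.ofLp.1‖
      ≤ (∏ i, Real.exp (t * h i) ^ α i) * ∏ i, x.ofLp.2 i ^ α i := by gcongr
    _ = ∏ i, (Real.exp (t * h i) * x.ofLp.2 i) ^ α i := by
      rw [← Finset.prod_mul_distrib]
      exact Finset.prod_congr rfl fun i _ =>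
        (Real.mul_rpow (Real.exp_pos _).le (hx_nonneg i)).symm

theorem image_powConeFlow_powCone {α : Fin n → ℝ}
    (hG : G + Gᵀ = (2 * ∑ i, α i * h i) • 1) (t : ℝ) :
    powConeFlow G h t '' PowCone m n α = PowCone m n α := by
  refine Set.Subset.antisymm (Set.image_subset_iff.2 fun x hx =>
    powConeFlow_mem_powCone G h hG t hx) fun y hy => ?_
  refine ⟨powConeFlow G h (-t) y, powConeFlow_mem_powCone G h hG (-t) hy, ?_⟩
  rw [powConeFlow_add, add_neg_cancel, powConeFlow_zero]

end powConeFlow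

theorem powCone_lie_algebra_exp_general (m n : ℕ) (α : Fin n → ℝ)
    (G : Matrix (Fin m) (Fin m) ℝ) (h : Fin n → ℝ)
    (hG : G + G.transpose = (2 * ∑ i, α i * h i) • (1 : Matrix (Fin m) (Fin m) ℝ))
    (t : ℝ) :
    (∀ x : EuclideanSpace ℝ (Fin m),
      ‖toEuc ((NormedSpace.exp (t • G)).mulVec x.ofLp)‖ =
        (∏ i, Real.exp (t * h i) ^ α i) * ‖x‖) ∧
    (fun x : E m n =>
        mkE ((NormedSpace.exp (t • G)).mulVec x.ofLp.1.ofLp)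
          (fun i => Real.exp (t * h i) * x.ofLp.2 i)) '' PowCone m n α = PowCone m n α := by
  refine ⟨fun x => ?_, image_powConeFlow_powCone G h hG t⟩
  rw [norm_toEuc_exp_smul_mulVec hG, Real.prod_exp_mul_rpow]

/-- If `G + Gᵀ = 2(αᵀh) I`, then `e^{tG}` scales norms by `∏ (e^{t hᵢ})^{αᵢ}` and the block
diagonal map `[[e^{tG},0],[0,Diag(e^{th})]]` maps the power cone onto itself. -/
theorem powCone_lie_algebra_exp (m n : ℕ) (hm : 1 ≤ m) (hn : 2 ≤ n)
    (α : Fin n → ℝ) (hα : ∀ i, 0 < α i ∧ α i < 1) (hαsum : ∑ i, α i = 1)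
    (G : Matrix (Fin m) (Fin m) ℝ) (h : Fin n → ℝ)
    (hG : G + G.transpose = (2 * ∑ i, α i * h i) • (1 : Matrix (Fin m) (Fin m) ℝ))
    (t : ℝ) :
    (∀ x : EuclideanSpace ℝ (Fin m),
      ‖toEuc ((NormedSpace.exp (t • G)).mulVec x.ofLp)‖ =
        (∏ i, Real.exp (t * h i) ^ α i) * ‖x‖) ∧
    (fun x : E m n =>
        mkE ((NormedSpace.exp (t • G)).mulVec x.ofLp.1.ofLp)
          (fun i => Real.exp (t * h i) * x.ofLp.2 i)) '' PowCone m n α = PowCone m n α :=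
  powCone_lie_algebra_exp_general m n α G h hG t
end
end

section
/- Let z = (z̄, z̃) ∈ ∂(P^α_{m,n})^* with z̄ ≠ 0 (so z̃ᵢ > 0 for all i), and let f = (-z̄/‖z̄‖², α ∘ z̃^{-1}) generate the ray F_r = {z}^⊥ ∩ P^α_{m,n}. For ε ∈ (0, α₁) define q_ε = (-z̄/‖z̄‖², q̃_ε) with (q̃_ε)₁ = (α₁-ε)/z̃₁, (q̃_ε)₂ = (α₂+ε)/z̃₂, and (q̃_ε)ᵢ = αᵢ/z̃ᵢ for i ≥ 3. Then ⟨z, q_ε⟩ = 0, dist(q_ε, P^α_{m,n}) = O(ε²) and dist(q_ε, F_r) = Ω(ε) as ε ↓ 0; hence limsup_{ε↓0} dist(q_ε, P^α_{m,n})^{1/2} / dist(q_ε, F_r) < ∞. -/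
open Finset

noncomputable section

/-!
Along `q_ε` the products `z̃ᵢ q̃ᵢ` differ from `αᵢ` only by moving `ε` from the first coordinate
to the second, so `⟨z, q_ε⟩ = 0` persists, while the geometric mean `∏ q̃ᵢ ^ αᵢ` falls short of `‖q̄_ε‖` only by
the factor `(1 - ε/α₁)^α₁ (1 + ε/α₂)^α₂`, whose logarithm has no first-order term; shrinking
`q̄_ε` radially therefore reaches the cone within `O(ε²)`. On the other hand the minor
`q̃₁ f̃₂ - q̃₂ f̃₁` vanishes on the ray `F_r`, is `(f̃₁ + f̃₂)`-Lipschitz, and equals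
`-ε (α₁ + α₂) / (z̃₁ z̃₂)` at `q_ε`, which forces `dist(q_ε, F_r) = Ω(ε)`.
-/

namespace Real

theorem sub_two_mul_sq_le_log_one_add {y : ℝ} (hy : -1 / 2 ≤ y) : y - 2 * y ^ 2 ≤ log (1 + y) := by
  have hpos : 0 < 1 + y := by linarith
  calc y - 2 * y ^ 2 ≤ 1 - (1 + y)⁻¹ := by
        have hdiff : 1 - (1 + y)⁻¹ - (y - 2 * y ^ 2) = y ^ 2 * (1 + 2 * y) / (1 + y) := by
          field_simp; ring
        have : 0 ≤ 1 + 2 * y := by linarith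
        rw [← sub_nonneg, hdiff]
        positivity
    _ ≤ log (1 + y) := one_sub_inv_le_log_of_pos hpos

theorem one_sub_rpow_mul_rpow_le {a b ε : ℝ} (ha : 0 < a) (hb : 0 < b) (hε : 0 ≤ ε)
    (hεa : ε ≤ a / 2) :
    1 - (1 - ε / a) ^ a * (1 + ε / b) ^ b ≤ 2 * (1 / a + 1 / b) * ε ^ 2 := by
  have hu : ε / a ≤ 1 / 2 := by rw [div_le_iff₀ ha]; linarith
  have h₀ : 0 < 1 - ε / a := by linarith
  have h₁ : 0 < 1 + ε / b := by positivity
  have hlog₀ := sub_two_mul_sq_le_log_one_add (y := -(ε / a)) (by linarith)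
  have hlog₁ := sub_two_mul_sq_le_log_one_add (y := ε / b) (by linarith [div_nonneg hε hb.le])
  rw [← sub_eq_add_neg] at hlog₀
  have hlog : log ((1 - ε / a) ^ a * (1 + ε / b) ^ b)
      = a * log (1 - ε / a) + b * log (1 + ε / b) := by
    rw [log_mul (rpow_pos_of_pos h₀ a).ne' (rpow_pos_of_pos h₁ b).ne', log_rpow h₀, log_rpow h₁]
  have hle := log_le_sub_one_of_pos (mul_pos (rpow_pos_of_pos h₀ a) (rpow_pos_of_pos h₁ b))
  rw [hlog] at hle
  have e₀ : a * (-(ε / a) - 2 * (-(ε / a)) ^ 2) = -ε - 2 / a * ε ^ 2 := by field_simp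
  have e₁ : b * (ε / b - 2 * (ε / b) ^ 2) = ε - 2 / b * ε ^ 2 := by field_simp
  have m₀ := mul_le_mul_of_nonneg_left hlog₀ ha.le
  have m₁ := mul_le_mul_of_nonneg_left hlog₁ hb.le
  rw [e₀] at m₀
  rw [e₁] at m₁
  have e : 2 * (1 / a + 1 / b) * ε ^ 2 = 2 / a * ε ^ 2 + 2 / b * ε ^ 2 := by ring
  linarith

end Real

theorem infDist_powCone_le_s18 {m n : ℕ} (α : Fin n → ℝ) (x : E m n) (hx : ∀ i, 0 ≤ x.ofLp.2 i) :
    Metric.infDist x (PowCone m n α) ≤ max (‖x.ofLp.1‖ - ∏ i, x.ofLp.2 i ^ α i) 0 := by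
  set P := ∏ i, x.ofLp.2 i ^ α i
  have hP : 0 ≤ P := prod_nonneg fun i _ => Real.rpow_nonneg (hx i) _
  by_cases hle : ‖x.ofLp.1‖ ≤ P
  · rw [Metric.infDist_zero_of_mem (show x ∈ PowCone m n α from ⟨hx, hle⟩)]
    exact le_max_right _ _
  have hxpos : 0 < ‖x.ofLp.1‖ := hP.trans_lt (not_le.1 hle)
  have hr : P / ‖x.ofLp.1‖ ≤ 1 := div_le_one_of_le₀ (not_le.1 hle).le hxpos.le
  set y : E m n := WithLp.toLp 2 ((P / ‖x.ofLp.1‖) • x.ofLp.1, x.ofLp.2)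
  have hy : ‖y.ofLp.1‖ = P := by
    simp only [y, norm_smul, Real.norm_eq_abs, abs_of_nonneg (div_nonneg hP hxpos.le)]
    exact div_mul_cancel₀ _ hxpos.ne'
  have hdist₁ : dist x.ofLp.1 y.ofLp.1 = ‖x.ofLp.1‖ - P :=
    calc ‖x.ofLp.1 - (P / ‖x.ofLp.1‖) • x.ofLp.1‖
        = (1 - P / ‖x.ofLp.1‖) * ‖x.ofLp.1‖ := by
          rw [← norm_smul_of_nonneg (by linarith), sub_smul, one_smul]
      _ = ‖x.ofLp.1‖ - P := by field_simp
  have hdist : dist x y = ‖x.ofLp.1‖ - P := by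
    rw [WithLp.prod_dist_eq_of_L2]
    change √(dist x.ofLp.1 y.ofLp.1 ^ 2 + dist x.ofLp.2 x.ofLp.2 ^ 2) = _
    rw [dist_self, hdist₁, zero_pow two_ne_zero, add_zero, Real.sqrt_sq (by linarith)]
  calc Metric.infDist x (PowCone m n α) ≤ dist x y :=
        Metric.infDist_le_dist_of_mem ⟨hx, hy.le⟩
    _ ≤ _ := hdist ▸ le_max_left _ _

theorem abs_snd_sub_le_dist {m n : ℕ} (x y : E m n) (i : Fin n) :
    |x.ofLp.2 i - y.ofLp.2 i| ≤ dist x y :=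
  (PiLp.dist_apply_le _ _ i).trans (WithLp.dist_snd_le x y)

theorem abs_mul_sub_mul_le_infDist_ray {m n : ℕ} (x f : E m n) (i j : Fin n) :
    |x.ofLp.2 i * f.ofLp.2 j - x.ofLp.2 j * f.ofLp.2 i|
      ≤ (|f.ofLp.2 i| + |f.ofLp.2 j|) * Metric.infDist x {y | ∃ t : ℝ, 0 ≤ t ∧ y = t • f} := by
  set s := |f.ofLp.2 i| + |f.ofLp.2 j|
  rcases (show 0 ≤ s by positivity).eq_or_lt with hs | hs
  · obtain ⟨hfi, hfj⟩ := (add_eq_zero_iff_of_nonneg (abs_nonneg _) (abs_nonneg _)).1 hs.symm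
    rw [abs_eq_zero.1 hfi, abs_eq_zero.1 hfj, ← hs]
    simp
  have hne : {y : E m n | ∃ t : ℝ, 0 ≤ t ∧ y = t • f}.Nonempty := ⟨0, 0, le_rfl, (zero_smul ℝ f).symm⟩
  rw [← div_le_iff₀' hs, Metric.le_infDist hne]
  rintro _ ⟨t, -, rfl⟩
  rw [div_le_iff₀' hs]
  have hi := abs_snd_sub_le_dist x (t • f) i
  have hj := abs_snd_sub_le_dist x (t • f) j
  calc |x.ofLp.2 i * f.ofLp.2 j - x.ofLp.2 j * f.ofLp.2 i|
      = |(x.ofLp.2 i - t * f.ofLp.2 i) * f.ofLp.2 j - (x.ofLp.2 j - t * f.ofLp.2 j) * f.ofLp.2 i| := by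
        ring_nf
    _ ≤ |x.ofLp.2 i - t * f.ofLp.2 i| * |f.ofLp.2 j| + |x.ofLp.2 j - t * f.ofLp.2 j| * |f.ofLp.2 i| := by
        rw [← abs_mul, ← abs_mul]; exact abs_sub _ _
    _ ≤ dist x (t • f) * |f.ofLp.2 j| + dist x (t • f) * |f.ofLp.2 i| := by
        gcongr
        exacts [hi, hj]
    _ = s * dist x (t • f) := by ring

theorem EuclideanSpace.sum_mul_smul_self {ι : Type*} [Fintype ι] (v : EuclideanSpace ℝ ι) (c : ℝ) :
    ∑ i, v i * (c • v) i = c * ‖v‖ ^ 2 := by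
  rw [← real_inner_self_eq_norm_sq, ← real_inner_smul_right]
  simp [PiLp.inner_apply, mul_comm]

def IsTransfer {ι : Type*} (w z x : ι → ℝ) (i j : ι) (ε : ℝ) : Prop :=
  x i = (w i - ε) / z i ∧ x j = (w j + ε) / z j ∧ ∀ k, k ≠ i → k ≠ j → x k = w k / z k

namespace IsTransfer

variable {ι : Type*} {w z x : ι → ℝ} {i j : ι} {ε : ℝ}

theorem sum_mul_eq [Fintype ι] (h : IsTransfer w z x i j ε) (hij : i ≠ j) (hz : ∀ k, z k ≠ 0) :
    ∑ k, z k * x k = ∑ k, w k := by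
  obtain ⟨hxi, hxj, hx⟩ := h
  rw [← sub_eq_zero, ← sum_sub_distrib, Fintype.sum_eq_add i j hij]
  · rw [hxi, hxj, mul_div_cancel₀ _ (hz i), mul_div_cancel₀ _ (hz j)]
    ring
  · rintro k ⟨hki, hkj⟩
    rw [hx k hki hkj, mul_div_cancel₀ _ (hz k), sub_self]

theorem nonneg (h : IsTransfer w z x i j ε) (hw : ∀ k, 0 < w k) (hz : ∀ k, 0 < z k)
    (hε : 0 ≤ ε) (hεi : ε ≤ w i) (k : ι) : 0 ≤ x k := by
  obtain ⟨hxi, hxj, hx⟩ := h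
  by_cases hki : k = i
  · subst hki; rw [hxi]; exact div_nonneg (by linarith) (hz k).le
  by_cases hkj : k = j
  · subst hkj; rw [hxj]; exact div_nonneg (by linarith [hw k]) (hz k).le
  rw [hx k hki hkj]; exact div_nonneg (hw k).le (hz k).le

theorem prod_rpow_eq [Fintype ι] (h : IsTransfer w z x i j ε) (hij : i ≠ j)
    (hw : ∀ k, 0 < w k) (hz : ∀ k, 0 < z k) (hε : 0 ≤ ε) (hεi : ε ≤ w i) :
    ∏ k, x k ^ w k = (∏ k, (w k / z k) ^ w k) * ((1 - ε / w i) ^ w i * (1 + ε / w j) ^ w j) := by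
  have hx₀ := h.nonneg hw hz hε hεi
  obtain ⟨hxi, hxj, hx⟩ := h
  have hsplit : ∀ k, x k ^ w k = (w k / z k) ^ w k * (z k * x k / w k) ^ w k := fun k => by
    have := hz k; have := hw k; have := hx₀ k
    rw [← Real.mul_rpow (by positivity) (by positivity)]
    congr 1; field_simp
  rw [prod_congr rfl fun k _ => hsplit k, prod_mul_distrib,
    Fintype.prod_eq_mul (f := fun k => (z k * x k / w k) ^ w k) i j hij]
  · have := hz i; have := hz j; have := hw i; have := hw j
    rw [hxi, hxj]
    congr 3 <;> field_simp
  · rintro k ⟨hki, hkj⟩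
    rw [hx k hki hkj, mul_div_cancel₀ _ (hz k).ne', div_self (hw k).ne', Real.one_rpow]

end IsTransfer

section PowConeTransfer

variable {m n : ℕ} {α z : Fin n → ℝ} {i j : Fin n} {ε : ℝ}

theorem infDist_powCone_le_of_isTransfer (x : E m n) (hα : ∀ k, 0 < α k) (hz : ∀ k, 0 < z k)
    (hij : i ≠ j) (hε : 0 ≤ ε) (hεi : ε ≤ α i / 2) (hx : IsTransfer α z x.ofLp.2.ofLp i j ε)
    (hx₁ : ‖x.ofLp.1‖ = ∏ k, (α k / z k) ^ α k) :
    Metric.infDist x (PowCone m n α) ≤ 2 * (1 / α i + 1 / α j) * ‖x.ofLp.1‖ * ε ^ 2 := by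
  have hαi := hα i; have hαj := hα j
  have hgap := Real.one_sub_rpow_mul_rpow_le hαi hαj hε hεi
  refine (infDist_powCone_le_s18 α x (hx.nonneg hα hz hε (by linarith))).trans (max_le ?_ (by positivity))
  rw [hx.prod_rpow_eq hij hα hz hε (by linarith), ← hx₁]
  have := mul_le_mul_of_nonneg_left hgap (norm_nonneg x.ofLp.1)
  linarith

theorem le_infDist_ray_of_isTransfer (x f : E m n) (hα : ∀ k, 0 < α k) (hz : ∀ k, 0 < z k)
    (hε : 0 ≤ ε) (hx : IsTransfer α z x.ofLp.2.ofLp i j ε) (hf : ∀ k, f.ofLp.2 k = α k / z k) :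
    (α i + α j) / (α i * z j + α j * z i) * ε
      ≤ Metric.infDist x {y | ∃ t : ℝ, 0 ≤ t ∧ y = t • f} := by
  have hαi := hα i; have hαj := hα j; have hzi := hz i; have hzj := hz j
  have key := abs_mul_sub_mul_le_infDist_ray x f i j
  rw [hf, hf, hx.1, hx.2.1, abs_of_pos (div_pos hαi hzi), abs_of_pos (div_pos hαj hzj)] at key
  have hcross : (α i - ε) / z i * (α j / z j) - (α j + ε) / z j * (α i / z i)
      = -(ε * (α i + α j) / (z i * z j)) := by
    field_simp; ring
  rw [hcross, abs_neg, abs_of_nonneg (by positivity), ← div_le_iff₀' (by positivity)] at key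
  refine le_of_eq_of_le ?_ key
  rw [eq_div_iff (by positivity)]
  field_simp

end PowConeTransfer

/-- Optimality of the exponent `1/2` for the one-dimensional face `F_r`: along the curve
`q_ε ∈ {z}^⊥` one has `dist(q_ε, P) = O(ε²)` and `dist(q_ε, F_r) = Ω(ε)` as `ε ↓ 0`. -/
theorem powCone_half_optimality (m n : ℕ) (hn : 2 ≤ n)
    (α : Fin n → ℝ) (hα : ∀ i, 0 < α i ∧ α i < 1) (hαsum : ∑ i, α i = 1)
    (z : E m n) (hz2 : ∀ i, 0 < z.ofLp.2 i)
    (hzbd : ‖z.ofLp.1‖ = ∏ i, (z.ofLp.2 i / α i) ^ α i) (hz1 : z.ofLp.1 ≠ 0)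
    (f : E m n) (hf2 : ∀ i, f.ofLp.2 i = α i / z.ofLp.2 i)
    (Fr : Set (E m n)) (hFr : Fr = {x : E m n | ∃ t : ℝ, 0 ≤ t ∧ x = t • f})
    (q : ℝ → E m n)
    (hq1 : ∀ ε ∈ Set.Ioo (0:ℝ) (α ⟨0, by omega⟩),
      (q ε).ofLp.1 = (-(‖z.ofLp.1‖ ^ 2)⁻¹) • z.ofLp.1)
    (hq2 : ∀ ε ∈ Set.Ioo (0:ℝ) (α ⟨0, by omega⟩),
      (q ε).ofLp.2 ⟨0, by omega⟩ = (α ⟨0, by omega⟩ - ε) / z.ofLp.2 ⟨0, by omega⟩ ∧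
      (q ε).ofLp.2 ⟨1, by omega⟩ = (α ⟨1, by omega⟩ + ε) / z.ofLp.2 ⟨1, by omega⟩ ∧
      ∀ i : Fin n, i ≠ ⟨0, by omega⟩ → i ≠ ⟨1, by omega⟩ →
        (q ε).ofLp.2 i = α i / z.ofLp.2 i) :
    (∀ ε ∈ Set.Ioo (0:ℝ) (α ⟨0, by omega⟩),
      (∑ i, z.ofLp.1 i * (q ε).ofLp.1 i) + (∑ i, z.ofLp.2 i * (q ε).ofLp.2 i) = 0) ∧
    ∃ c₁ c₂ ε₀ : ℝ, 0 < c₁ ∧ 0 < c₂ ∧ 0 < ε₀ ∧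
      ∀ ε : ℝ, 0 < ε → ε < ε₀ → ε < α ⟨0, by omega⟩ →
        Metric.infDist (q ε) (PowCone m n α) ≤ c₁ * ε ^ 2 ∧
        c₂ * ε ≤ Metric.infDist (q ε) Fr := by
  set i₀ : Fin n := ⟨0, by omega⟩
  set i₁ : Fin n := ⟨1, by omega⟩
  have hi : i₀ ≠ i₁ := by simp [i₀, i₁, Fin.ext_iff]
  have hw : ∀ i, 0 < α i := fun i => (hα i).1
  have hw₀ := hw i₀; have hw₁ := hw i₁; have hz₀ := hz2 i₀; have hz₁ := hz2 i₁
  have hN : 0 < ‖z.ofLp.1‖ := norm_pos_iff.2 hz1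
  have hq₁ : ∀ ε ∈ Set.Ioo 0 (α i₀), ‖(q ε).ofLp.1‖ = ‖z.ofLp.1‖⁻¹ := fun ε hε => by
    rw [hq1 ε hε, norm_smul, norm_neg, norm_inv, norm_pow, norm_norm]
    field_simp
  have hprod : ∏ k, (α k / z.ofLp.2 k) ^ α k = ‖z.ofLp.1‖⁻¹ := by
    rw [hzbd, ← prod_inv_distrib]
    exact prod_congr rfl fun k _ => by rw [← Real.inv_rpow (div_nonneg (hz2 k).le (hw k).le), inv_div]
  refine ⟨fun ε hε => ?_, 2 * (1 / α i₀ + 1 / α i₁) * ‖z.ofLp.1‖⁻¹,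
    (α i₀ + α i₁) / (α i₀ * z.ofLp.2 i₁ + α i₁ * z.ofLp.2 i₀), α i₀ / 2,
    by positivity, by positivity, by positivity, fun ε hε hεε₀ hεα => ⟨?_, ?_⟩⟩
  · rw [hq1 ε hε, EuclideanSpace.sum_mul_smul_self,
      IsTransfer.sum_mul_eq (hq2 ε hε) hi fun k => (hz2 k).ne', hαsum]
    field_simp
    ring
  · rw [← hq₁ ε ⟨hε, hεα⟩]
    exact infDist_powCone_le_of_isTransfer (q ε) hw hz2 hi hε.le hεε₀.le (hq2 ε ⟨hε, hεα⟩)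
      ((hq₁ ε ⟨hε, hεα⟩).trans hprod.symm)
  · rw [hFr]
    exact le_infDist_ray_of_isTransfer (q ε) f hw hz2 hε.le (hq2 ε ⟨hε, hεα⟩) hf2
end
end
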